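/- arXiv:1302.3737 — 3 statements merged into one kernel-verified Lean document; each statement's English description precedes it below -/
import Mathlib

section
/- Let d ≥ 1 and let φ : Homeo₀(ℝᵈ) → Homeo(ℝ) be a group homomorphism such that no point of ℝ is fixed by every element of φ(Homeo₀(ℝᵈ)). For an embedded (d−1)-dimensional ball D write F_D = Fix(φ(H_D^d)). If D and D' are disjoint embedded (d−1)-dimensional balls, then F_D ∩ F_{D'} = ∅. -/
/-!
Suppose `y ∈ F_D ∩ F_{D'}` and pick `f ∈ Homeo₀(ℝᵈ)` with `φ f y ≠ y`; it is the identity off a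
compact set `K`. Some `g` fixing a neighbourhood of `D'` pushes `D` off `K`: in a chart where `D`
is the flat ball, shrink it to a tiny ball around `0` by perturbations of the identity supported
near `D`, then slide the tiny ball to infinity along a path avoiding `D'` (the image of a ray
from the flat ball). Now `g⁻¹ f g` fixes a neighbourhood of `D`, so
`φ f = φ g · φ (g⁻¹ f g) · (φ g)⁻¹` fixes `y`.
-/

/-- The group of homeomorphisms of a topological space, with composition as
multiplication: `(f * g) x = f (g x)`. -/
instance homeoGroup {X : Type*} [TopologicalSpace X] : Group (X ≃ₜ X) where
  mul f g := g.trans f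
  one := Homeomorph.refl X
  inv := Homeomorph.symm
  mul_assoc _ _ _ := rfl
  one_mul f := Homeomorph.ext fun _ => rfl
  mul_one f := Homeomorph.ext fun _ => rfl
  inv_mul_cancel f := Homeomorph.ext fun x => f.symm_apply_apply x

/-- `f` is isotopic to the identity through a compactly supported isotopy: there is a
level-preserving homeomorphism `H` of `X × [0,1]` (so each time slice `H (·, t)` is a
homeomorphism of `X`, varying continuously in `t`), supported in a fixed compact set `K`,
which is the identity at time `0` and equals `f` at time `1`. -/
def IsotopicToIdC {X : Type*} [TopologicalSpace X] (f : X ≃ₜ X) : Prop :=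
  ∃ H : (X × unitInterval) ≃ₜ (X × unitInterval), ∃ K : Set X, IsCompact K ∧
    (∀ p : X × unitInterval, (H p).2 = p.2) ∧
    (∀ x : X, H (x, 0) = (x, 0)) ∧
    (∀ x : X, H (x, 1) = (f x, 1)) ∧
    (∀ t : unitInterval, ∀ x ∉ K, H (x, t) = (x, t))

/-- `Homeo0 X`: the group of compactly supported homeomorphisms of `X` which are
isotopic to the identity through a compactly supported isotopy. -/
def Homeo0 (X : Type*) [TopologicalSpace X] : Subgroup (X ≃ₜ X) where
  carrier := {f | IsotopicToIdC f}
  one_mem' := ⟨Homeomorph.refl _, ∅, isCompact_empty, fun _ => rfl, fun _ => rfl,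
    fun _ => rfl, fun _ _ _ => rfl⟩
  mul_mem' := by
    rintro f g ⟨H₁, K₁, hK₁, hl₁, h0₁, h1₁, hs₁⟩ ⟨H₂, K₂, hK₂, hl₂, h0₂, h1₂, hs₂⟩
    refine ⟨H₂.trans H₁, K₁ ∪ K₂, hK₁.union hK₂, fun p => ?_, fun x => ?_, fun x => ?_,
      fun t x hx => ?_⟩
    · show (H₁ (H₂ p)).2 = p.2
      rw [hl₁, hl₂]
    · show H₁ (H₂ (x, 0)) = (x, 0)
      rw [h0₂, h0₁]
    · show H₁ (H₂ (x, 1)) = ((f * g) x, 1)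
      rw [h1₂, h1₁]
      rfl
    · show H₁ (H₂ (x, t)) = (x, t)
      rw [hs₂ t x fun h => hx (Or.inr h), hs₁ t x fun h => hx (Or.inl h)]
  inv_mem' := by
    rintro f ⟨H, K, hK, hl, h0, h1, hs⟩
    refine ⟨H.symm, K, hK, fun p => ?_, fun x => ?_, fun x => ?_, fun t x hx => ?_⟩
    · conv_rhs => rw [← H.apply_symm_apply p]
      rw [hl]
    · conv_lhs => rw [← h0 x]
      exact H.symm_apply_apply _
    · have : H ((f⁻¹ : X ≃ₜ X) x, 1) = (x, 1) := by
        rw [h1]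
        show (f (f.symm x), 1) = (x, 1)
        rw [f.apply_symm_apply]
      rw [← this, H.symm_apply_apply]
    · conv_lhs => rw [← hs t x hx]
      exact H.symm_apply_apply _

/-- The subgroup of `Homeo₀ X` consisting of homeomorphisms which pointwise fix a
neighbourhood of the set `S`. -/
def fixingNbhd {X : Type*} [TopologicalSpace X] (S : Set X) : Subgroup (Homeo0 X) where
  carrier := {f | ∃ U : Set X, IsOpen U ∧ S ⊆ U ∧ ∀ x ∈ U, (f : X ≃ₜ X) x = x}
  one_mem' := ⟨Set.univ, isOpen_univ, Set.subset_univ _, fun _ _ => rfl⟩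
  mul_mem' := by
    rintro f g ⟨U, hU, hSU, hf⟩ ⟨V, hV, hSV, hg⟩
    refine ⟨U ∩ V, hU.inter hV, Set.subset_inter hSU hSV, fun x hx => ?_⟩
    show (f : X ≃ₜ X) ((g : X ≃ₜ X) x) = x
    rw [hg x hx.2, hf x hx.1]
  inv_mem' := by
    rintro f ⟨U, hU, hSU, hf⟩
    refine ⟨U, hU, hSU, fun x hx => ?_⟩
    show ((f : X ≃ₜ X)).symm x = x
    conv_lhs => rw [← hf x hx]
    exact (f : X ≃ₜ X).symm_apply_apply x

/-- The closed unit ball of `ℝ^{d-1} × {0} ⊆ ℝ^d` (a single point when `d = 1`). -/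
def stdBallSet (d : ℕ) : Set (EuclideanSpace ℝ (Fin d)) :=
  {x | ‖x‖ ≤ 1 ∧ ∀ h : d - 1 < d, x ⟨d - 1, h⟩ = 0}

/-- An embedded `(d-1)`-dimensional ball in `ℝ^d`: the image of the closed unit ball of
`ℝ^{d-1} × {0}` under a homeomorphism of `ℝ^d`. -/
def IsEmbeddedBall {d : ℕ} (D : Set (EuclideanSpace ℝ (Fin d))) : Prop :=
  ∃ e : EuclideanSpace ℝ (Fin d) ≃ₜ EuclideanSpace ℝ (Fin d), D = e '' stdBallSet d

/-- The set of points of `Y` fixed by every element of the image under `φ` of the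
subgroup `H`. -/
def fixSet {G Y : Type*} [Group G] [TopologicalSpace Y] (φ : G →* (Y ≃ₜ Y))
    (H : Subgroup G) : Set Y :=
  {y | ∀ f ∈ H, φ f y = y}

open Metric Set Filter Topology Pointwise
open scoped NNReal

section Perturbation

variable {E : Type*} [NormedAddCommGroup E] [NormedSpace ℝ E] {F : E → E} {L : ℝ≥0}

lemma contractingWith_sub_smul (hL : L < 1) (hF : LipschitzWith L F) (y : E)
    (t : unitInterval) : ContractingWith L fun x => y - (t : ℝ) • F x := by
  refine ⟨hL, LipschitzWith.of_dist_le_mul fun a b => ?_⟩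
  rw [dist_sub_left, dist_smul₀, Real.norm_eq_abs, abs_of_nonneg t.2.1]
  calc (t : ℝ) * dist (F a) (F b) ≤ 1 * (L * dist a b) :=
        mul_le_mul t.2.2 (hF.dist_le_mul a b) dist_nonneg zero_le_one
    _ = L * dist a b := one_mul _

lemma dist_sub_smul_sub_smul_le {B : ℝ} (hB : ∀ z, ‖F z‖ ≤ B) (p q : E × unitInterval) (z : E) :
    dist (p.1 - (p.2 : ℝ) • F z) (q.1 - (q.2 : ℝ) • F z) ≤ (1 + B) * dist p q :=
  calc dist (p.1 - (p.2 : ℝ) • F z) (q.1 - (q.2 : ℝ) • F z)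
      ≤ dist p.1 q.1 + dist ((p.2 : ℝ) • F z) ((q.2 : ℝ) • F z) := dist_sub_sub_le _ _ _ _
    _ = dist p.1 q.1 + dist p.2 q.2 * ‖F z‖ := by
        rw [dist_eq_norm (_ • _), ← sub_smul, norm_smul]; rfl
    _ ≤ dist p q + dist p q * B := by
        rw [Prod.dist_eq]
        gcongr
        exacts [le_max_left _ _, le_max_right _ _, hB z]
    _ = (1 + B) * dist p q := by ring

variable [CompleteSpace E]

/-- The isotopy is `(x, t) ↦ x + t • F x`; its inverse at `(y, t)` is the fixed point of the
contraction `x ↦ y - t • F x`, which depends continuously on `(y, t)`. -/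
theorem exists_isotopicToIdC_add (hL : L < 1) (hF : LipschitzWith L F) {K : Set E}
    (hK : IsCompact K) (hFK : ∀ x ∉ K, F x = 0) :
    ∃ f : E ≃ₜ E, IsotopicToIdC f ∧ ∀ x, f x = x + F x := by
  obtain ⟨B, hB⟩ := hF.continuous.bounded_above_of_compact_support (HasCompactSupport.intro hK hFK)
  have hc := fun p : E × unitInterval => contractingWith_sub_smul hL hF p.1 p.2
  set G : E × unitInterval → E := fun p => (hc p).fixedPoint
  have hG : ∀ p : E × unitInterval, G p + (p.2 : ℝ) • F (G p) = p.1 := fun p =>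
    eq_sub_iff_add_eq.mp (hc p).fixedPoint_isFixedPt.symm
  have hG_add : ∀ (x : E) (t : unitInterval), G (x + (t : ℝ) • F x, t) = x := fun x t =>
    ((hc (_, t)).fixedPoint_unique (add_sub_cancel_right x ((t : ℝ) • F x))).symm
  have hG_dist : ∀ p q, dist (G p) (G q) ≤ (1 + B) / (1 - L) * dist p q := fun p q => by
    rw [div_mul_eq_mul_div]
    exact (hc p).dist_fixedPoint_fixedPoint_of_dist_le' _ (hc p).fixedPoint_isFixedPt
      (hc q).fixedPoint_isFixedPt (dist_sub_smul_sub_smul_le hB p q)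
  have hG_cont : Continuous G := (LipschitzWith.of_dist_le' hG_dist).continuous
  have hF_cont : Continuous F := hF.continuous
  let H : (E × unitInterval) ≃ₜ (E × unitInterval) :=
    { toFun := fun p => (p.1 + (p.2 : ℝ) • F p.1, p.2)
      invFun := fun p => (G p, p.2)
      left_inv := fun p => Prod.ext (hG_add p.1 p.2) rfl
      right_inv := fun p => Prod.ext (hG p) rfl
      continuous_toFun := by fun_prop
      continuous_invFun := by fun_prop }
  let f : E ≃ₜ E :=
    { toFun := fun x => x + F x
      invFun := fun y => G (y, 1)
      left_inv := fun x => by simpa using hG_add x 1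
      right_inv := fun y => by simpa using hG (y, 1)
      continuous_toFun := by fun_prop
      continuous_invFun := by fun_prop }
  refine ⟨f, ⟨H, K, hK, fun _ => rfl, fun x => ?_, fun x => ?_, fun t x hx => ?_⟩, fun _ => rfl⟩
  · simp [H]
  · simp [H, f]
  · simp [H, hFK x hx]

end Perturbation

section Pushing

variable {X : Type*} [TopologicalSpace X]

lemma IsotopicToIdC.conj {f : X ≃ₜ X} (hf : IsotopicToIdC f) (e : X ≃ₜ X) :
    IsotopicToIdC (e * f * e⁻¹) := by
  obtain ⟨H, K, hK, hl, h0, h1, hs⟩ := hf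
  let E : (X × unitInterval) ≃ₜ (X × unitInterval) := e.prodCongr (Homeomorph.refl _)
  refine ⟨(E.symm.trans H).trans E, e '' K, hK.image e.continuous, fun p => ?_, fun x => ?_,
    fun x => ?_, fun t x hx => ?_⟩
  · exact hl (e.symm p.1, p.2)
  · simp [E, h0]
  · simp [E, h1]
  · have hx' : e.symm x ∉ K := fun h => hx ⟨_, h, e.apply_symm_apply x⟩
    simp [E, hs t _ hx']

instance Homeo0.normal : (Homeo0 X).Normal :=
  ⟨fun _ hf e => IsotopicToIdC.conj hf e⟩

lemma IsotopicToIdC.exists_isCompact_eq_self {f : X ≃ₜ X} (hf : IsotopicToIdC f) :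
    ∃ K, IsCompact K ∧ ∀ x ∉ K, f x = x := by
  obtain ⟨H, K, hK, -, -, h1, hs⟩ := hf
  exact ⟨K, hK, fun x hx => congrArg Prod.fst ((h1 x).symm.trans (hs 1 x hx))⟩

def PushableInto (A C C' : Set X) : Prop :=
  ∃ g ∈ fixingNbhd A, (g : X ≃ₜ X) '' C ⊆ C'

namespace PushableInto

variable {A C C' C'' : Set X}

lemma refl (A C : Set X) : PushableInto A C C :=
  ⟨1, one_mem _, fun _ ⟨_, hx, hxy⟩ => hxy ▸ hx⟩

lemma trans (h : PushableInto A C C') (h' : PushableInto A C' C'') : PushableInto A C C'' := by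
  obtain ⟨g, hg, hgC⟩ := h
  obtain ⟨g', hg', hgC'⟩ := h'
  refine ⟨g' * g, mul_mem hg' hg, ?_⟩
  rintro _ ⟨x, hx, rfl⟩
  exact hgC' ⟨_, hgC ⟨x, hx, rfl⟩, rfl⟩

lemma mono_right (h : PushableInto A C C') (hC' : C' ⊆ C'') : PushableInto A C C'' :=
  h.trans ⟨1, one_mem _, fun _ ⟨_, hx, hxy⟩ => hxy ▸ hC' hx⟩

lemma image_homeomorph (h : PushableInto A C C') (e : X ≃ₜ X) :
    PushableInto (e '' A) (e '' C) (e '' C') := by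
  obtain ⟨g, ⟨U, hU, hAU, hgU⟩, hgC⟩ := h
  refine ⟨⟨e * g * e⁻¹, (Homeo0.normal).conj_mem _ g.2 e⟩,
    ⟨e '' U, e.isOpenMap U hU, image_mono hAU, ?_⟩, ?_⟩
  · rintro _ ⟨x, hx, rfl⟩
    show e ((g : X ≃ₜ X) (e.symm (e x))) = e x
    rw [e.symm_apply_apply, hgU x hx]
  · rintro _ ⟨_, ⟨x, hx, rfl⟩, rfl⟩
    show e ((g : X ≃ₜ X) (e.symm (e x))) ∈ e '' C'
    rw [e.symm_apply_apply]
    exact mem_image_of_mem e (hgC (mem_image_of_mem (g : X ≃ₜ X) hx))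

end PushableInto

lemma inv_mul_mul_mem_fixingNbhd {f g : Homeo0 X} {K S : Set X} (hK : IsClosed K)
    (hf : ∀ x ∉ K, (f : X ≃ₜ X) x = x) (hg : (g : X ≃ₜ X) '' S ⊆ Kᶜ) :
    g⁻¹ * f * g ∈ fixingNbhd S := by
  refine ⟨(g : X ≃ₜ X) ⁻¹' Kᶜ, hK.isOpen_compl.preimage (g : X ≃ₜ X).continuous,
    fun x hx => hg ⟨x, hx, rfl⟩, fun x hx => ?_⟩
  show (g : X ≃ₜ X).symm ((f : X ≃ₜ X) ((g : X ≃ₜ X) x)) = x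
  rw [hf _ hx, Homeomorph.symm_apply_apply]

end Pushing

lemma apply_eq_self_of_inv_mul_mul_mem {G Y : Type*} [Group G] [TopologicalSpace Y]
    {φ : G →* (Y ≃ₜ Y)} {H H' : Subgroup G} {y : Y} (hy : y ∈ fixSet φ H)
    (hy' : y ∈ fixSet φ H') {f g : G} (hg : g ∈ H') (hfg : g⁻¹ * f * g ∈ H) : φ f y = y := by
  have hginv : φ g⁻¹ y = y := hy' _ (inv_mem hg)
  have hf : f = g * (g⁻¹ * f * g) * g⁻¹ := by group
  calc φ f y = φ g (φ (g⁻¹ * f * g) (φ g⁻¹ y)) := by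
        conv_lhs => rw [hf, map_mul, map_mul]
        rfl
    _ = y := by rw [hginv, hy _ hfg, hy' _ hg]

section Cutoff

variable {X : Type*} [PseudoMetricSpace X]

noncomputable def thickeningCutoff (δ : ℝ) (s : Set X) (x : X) : ℝ :=
  max 0 (1 - infDist x s / δ)

variable {δ : ℝ} {s : Set X} {x : X}

lemma thickeningCutoff_nonneg : 0 ≤ thickeningCutoff δ s x :=
  le_max_left _ _

lemma thickeningCutoff_le_one (hδ : 0 ≤ δ) : thickeningCutoff δ s x ≤ 1 :=
  max_le zero_le_one (sub_le_self _ (div_nonneg infDist_nonneg hδ))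

lemma thickeningCutoff_of_mem (hx : x ∈ s) : thickeningCutoff δ s x = 1 := by
  simp [thickeningCutoff, infDist_zero_of_mem hx]

lemma thickeningCutoff_of_notMem_thickening (hδ : 0 < δ) (hs : s.Nonempty)
    (hx : x ∉ thickening δ s) : thickeningCutoff δ s x = 0 := by
  rw [mem_thickening_iff_infDist_lt hs, not_lt] at hx
  exact max_eq_left (by rwa [sub_nonpos, one_le_div hδ])

lemma dist_thickeningCutoff_le (hδ : 0 < δ) (x y : X) :
    dist (thickeningCutoff δ s x) (thickeningCutoff δ s y) ≤ δ⁻¹ * dist x y := by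
  rw [Real.dist_eq, thickeningCutoff, thickeningCutoff, max_comm 0, max_comm 0]
  calc _ ≤ |(1 - infDist x s / δ) - (1 - infDist y s / δ)| := abs_max_sub_max_le_abs _ _ _
    _ = δ⁻¹ * dist (infDist y s) (infDist x s) := by
        rw [Real.dist_eq, ← abs_of_pos (inv_pos.mpr hδ), ← abs_mul]
        congr 1
        ring
    _ ≤ δ⁻¹ * dist x y := by
        gcongr
        simpa [dist_comm] using (lipschitz_infDist_pt s).dist_le_mul y x

end Cutoff

section NormedSpace

variable {E : Type*} [NormedAddCommGroup E] [NormedSpace ℝ E]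

lemma pushableInto_of_add [CompleteSpace E] {A C C' K : Set E} {F : E → E} {L : ℝ≥0}
    (hL : L < 1) (hF : LipschitzWith L F) (hK : IsCompact K) (hFK : ∀ x ∉ K, F x = 0)
    (hKA : Disjoint K A) (hC : ∀ x ∈ C, x + F x ∈ C') : PushableInto A C C' := by
  obtain ⟨f, hf, hfF⟩ := exists_isotopicToIdC_add hL hF hK hFK
  refine ⟨⟨f, hf⟩, ⟨Kᶜ, hK.isClosed.isOpen_compl, hKA.subset_compl_left, fun x hx => ?_⟩, ?_⟩
  · show f x = x
    rw [hfF, hFK x hx, add_zero]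
  · rintro _ ⟨x, hx, rfl⟩
    show f x ∈ C'
    rw [hfF]
    exact hC x hx

variable [ProperSpace E]

/-- Translation by `c' - c`, cut off outside `closedBall c (2 * r)`: it is `1/2`-Lipschitz
because `‖c' - c‖ ≤ r / 2`. -/
lemma pushableInto_closedBall_of_dist_le {A : Set E} {c c' : E} {r ρ : ℝ} (hr : 0 < r)
    (hA : Disjoint (closedBall c (2 * r)) A) (hc : dist c' c ≤ r / 2) (hρ : ρ ≤ r) :
    PushableInto A (closedBall c ρ) (closedBall c' ρ) := by
  set μ := thickeningCutoff r (closedBall c r)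
  refine pushableInto_of_add (F := fun w => μ w • (c' - c)) one_half_lt_one ?_
    (isCompact_closedBall c (2 * r)) (fun w hw => ?_) hA (fun w hw => ?_)
  · refine LipschitzWith.of_dist_le_mul fun w w' => ?_
    rw [dist_eq_norm, ← sub_smul, norm_smul, ← dist_eq_norm, ← dist_eq_norm c' c]
    calc dist (μ w) (μ w') * dist c' c ≤ r⁻¹ * dist w w' * (r / 2) :=
          mul_le_mul (dist_thickeningCutoff_le hr w w') hc dist_nonneg (by positivity)
      _ = (1 / 2 : ℝ≥0) * dist w w' := by push_cast; field_simp
  · have hw' : w ∉ thickening r (closedBall c r) := by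
      rw [thickening_closedBall hr hr.le]
      exact fun h => hw (ball_subset_closedBall.trans (closedBall_subset_closedBall
        (by linarith)) h)
    simp [μ, thickeningCutoff_of_notMem_thickening hr (nonempty_closedBall.mpr hr.le) hw']
  · have hμ : μ w = 1 := thickeningCutoff_of_mem (closedBall_subset_closedBall hρ hw)
    have hsub : w + (c' - c) - c' = w - c := by abel
    rw [mem_closedBall, dist_eq_norm] at hw ⊢
    rwa [hμ, one_smul, hsub]

/-- Nearby points `x, y` off `A` satisfy the relation both ways; connectedness does the rest. -/
lemma IsPreconnected.eventually_pushableInto_closedBall {A T : Set E} (hT : IsPreconnected T)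
    (hA : IsClosed A) (hTA : Disjoint T A) {p q : E} (hp : p ∈ T) (hq : q ∈ T) :
    ∀ᶠ ρ in 𝓝[>] (0 : ℝ), PushableInto A (closedBall p ρ) (closedBall q ρ) := by
  refine hT.induction₂' (fun p q => ∀ᶠ ρ in 𝓝[>] (0 : ℝ),
      PushableInto A (closedBall p ρ) (closedBall q ρ)) (fun x hx => ?_)
    (fun _ _ _ _ _ _ hxy hyz => (hxy.and hyz).mono fun _ h => h.1.trans h.2) hp hq
  obtain ⟨ε, hε, hεA⟩ := Metric.isOpen_iff.mp hA.isOpen_compl x (hTA.notMem_of_mem_left hx)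
  have hr : 0 < ε / 4 := by positivity
  have hρ : ∀ᶠ ρ in 𝓝[>] (0 : ℝ), ρ ≤ ε / 4 := nhdsWithin_le_nhds (eventually_le_nhds hr)
  filter_upwards [nhdsWithin_le_nhds (ball_mem_nhds x (half_pos hr))] with y hy
  rw [mem_ball] at hy
  refine ⟨hρ.mono fun ρ hρ => pushableInto_closedBall_of_dist_le hr ?_ hy.le hρ,
    hρ.mono fun ρ hρ => pushableInto_closedBall_of_dist_le hr ?_ (dist_comm x y ▸ hy.le) hρ⟩
  · exact subset_compl_iff_disjoint_right.mp
      ((closedBall_subset_ball (by linarith)).trans hεA)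
  · exact subset_compl_iff_disjoint_right.mp
      ((closedBall_subset_ball' (by linarith)).trans hεA)

end NormedSpace

section Shrinking

variable {E : Type*} [NormedAddCommGroup E] [NormedSpace ℝ E]

lemma dist_smul_self_le {φ : E → ℝ} {M K R : ℝ} (hR : 0 ≤ R) (hM : ∀ x, |φ x| ≤ M)
    (hφ : ∀ x y, dist (φ x) (φ y) ≤ K * dist x y) (hφR : ∀ x, φ x ≠ 0 → ‖x‖ ≤ R) (x y : E) :
    dist (φ x • x) (φ y • y) ≤ (M + K * R) * dist x y := by
  have key : ∀ x y : E, ‖y‖ ≤ R → dist (φ x • x) (φ y • y) ≤ (M + K * R) * dist x y := by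
    intro x y hy
    have hsplit : φ x • x - φ y • y = φ x • (x - y) + (φ x - φ y) • y := by
      rw [smul_sub, sub_smul]; abel
    calc dist (φ x • x) (φ y • y) ≤ ‖φ x • (x - y)‖ + ‖(φ x - φ y) • y‖ := by
          rw [dist_eq_norm, hsplit]; exact norm_add_le _ _
      _ = |φ x| * dist x y + dist (φ x) (φ y) * ‖y‖ := by
          rw [norm_smul, norm_smul, Real.norm_eq_abs, Real.norm_eq_abs, ← Real.dist_eq,
            dist_eq_norm x y]
      _ ≤ M * dist x y + K * dist x y * R :=
          add_le_add (mul_le_mul_of_nonneg_right (hM x) dist_nonneg)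
            (mul_le_mul (hφ x y) hy (norm_nonneg y) (dist_nonneg.trans (hφ x y)))
      _ = (M + K * R) * dist x y := by ring
  by_cases hy : φ y = 0
  · by_cases hx : φ x = 0
    · have hM0 : 0 ≤ M := (abs_nonneg _).trans (hM x)
      have hK0 : 0 ≤ K * dist x y := dist_nonneg.trans (hφ x y)
      rw [hx, hy, zero_smul, zero_smul, dist_self]
      nlinarith [dist_nonneg (x := x) (y := y)]
    · rw [dist_comm, dist_comm x y]
      exact key y x (hφR x hx)
  · exact key x y (hφR y hy)

variable [ProperSpace E]

/-- Repeatedly apply `v ↦ v - s • μ(v) • v`, where the cutoff `μ` is `1` on `S` and supported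
near `S`: on `S` it is the homothety of ratio `1 - s`, and for small `s` it is `1/2`-close to the
identity. -/
theorem StarConvex.pushableInto_closedBall_zero {A S : Set E} (hS0 : StarConvex ℝ 0 S)
    (hS : IsCompact S) (hSne : S.Nonempty) (hA : IsClosed A) (hSA : Disjoint S A) {ρ : ℝ}
    (hρ : 0 < ρ) : PushableInto A S (closedBall 0 ρ) := by
  obtain ⟨δ, hδ, hδA⟩ :=
    hS.exists_cthickening_subset_open hA.isOpen_compl hSA.subset_compl_right
  obtain ⟨R, hR, hSR⟩ := hS.isBounded.subset_closedBall_lt 0 0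
  set μ := thickeningCutoff δ S
  set s := δ / (2 * (R + 2 * δ))
  have hs : 0 < s := by positivity
  have hs1 : s < 1 := by rw [div_lt_one (by positivity)]; linarith
  have hF : LipschitzWith (1 / 2) fun v => (-(s * μ v)) • v := by
    refine LipschitzWith.of_dist_le_mul fun v w => ?_
    have h := dist_smul_self_le (φ := fun v => -(s * μ v)) (M := s) (K := s * δ⁻¹)
      (R := R + δ) (by positivity) (fun v => ?_) (fun v w => ?_) (fun v hv => ?_) v w
    · have hconst : s + s * δ⁻¹ * (R + δ) = 1 / 2 := by simp only [s]; field_simp; ring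
      calc _ ≤ _ := h
        _ = _ := by rw [hconst]; norm_num
    · rw [abs_neg, abs_of_nonneg (mul_nonneg hs.le thickeningCutoff_nonneg)]
      exact mul_le_of_le_one_right hs.le (thickeningCutoff_le_one hδ.le)
    · rw [dist_neg_neg, dist_eq_norm, ← mul_sub, norm_mul, Real.norm_of_nonneg hs.le,
        ← dist_eq_norm, mul_assoc]
      exact mul_le_mul_of_nonneg_left (dist_thickeningCutoff_le hδ v w) hs.le
    · have hμ : μ v ≠ 0 := fun h => hv (by simp [h])
      have hv' : v ∈ thickening δ (closedBall 0 R) := by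
        by_contra h'
        exact hμ (thickeningCutoff_of_notMem_thickening hδ hSne
          fun h => h' (thickening_subset_of_subset δ hSR h))
      rw [thickening_closedBall hδ hR.le, mem_ball_zero_iff] at hv'
      linarith
  have hshrink : ∀ n : ℕ, PushableInto A S ((1 - s) ^ n • S) := by
    intro n
    induction n with
    | zero => simpa using PushableInto.refl A S
    | succ n ih =>
      refine ih.trans (pushableInto_of_add one_half_lt_one hF hS.cthickening (fun v hv => ?_)
        (subset_compl_iff_disjoint_right.mp hδA) ?_)
      · have hv' : v ∉ thickening δ S := fun h => hv (thickening_subset_cthickening δ S h)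
        simp [μ, thickeningCutoff_of_notMem_thickening hδ hSne hv']
      · rintro _ ⟨u, hu, rfl⟩
        have hμ : μ ((1 - s) ^ n • u) = 1 := thickeningCutoff_of_mem
          (hS0.smul_mem hu (pow_nonneg (by linarith) n) (pow_le_one₀ (by linarith) (by linarith)))
        refine ⟨u, hu, ?_⟩
        rw [hμ]
        module
  obtain ⟨n, hn⟩ := exists_pow_lt_of_lt_one (div_pos hρ hR) (by linarith : 1 - s < 1)
  refine (hshrink n).mono_right ?_
  rintro _ ⟨u, hu, rfl⟩
  have hu' : ‖u‖ ≤ R := mem_closedBall_zero_iff.mp (hSR hu)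
  rw [mem_closedBall_zero_iff, norm_smul, Real.norm_of_nonneg (pow_nonneg (by linarith) n)]
  rw [lt_div_iff₀ hR] at hn
  nlinarith [pow_nonneg (by linarith : (0:ℝ) ≤ 1 - s) n]

end Shrinking

section Escaping

variable {E : Type*} [NormedAddCommGroup E] [NormedSpace ℝ E]

lemma exists_one_le_smul_notMem {y : E} (hy : y ≠ 0) {K : Set E} (hK : Bornology.IsBounded K) :
    ∃ t : ℝ, 1 ≤ t ∧ t • y ∉ K := by
  obtain ⟨C, hC⟩ := hK.exists_norm_le
  have hy' : 0 < ‖y‖ := norm_pos_iff.mpr hy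
  refine ⟨max 1 ((C + 1) / ‖y‖), le_max_left _ _, fun h => ?_⟩
  have h1 := hC _ h
  rw [norm_smul, Real.norm_of_nonneg (zero_le_one.trans (le_max_left _ _))] at h1
  have h2 : (C + 1) / ‖y‖ * ‖y‖ ≤ max 1 ((C + 1) / ‖y‖) * ‖y‖ :=
    mul_le_mul_of_nonneg_right (le_max_right _ _) hy'.le
  rw [div_mul_cancel₀ _ hy'.ne'] at h2
  linarith

lemma StarConvex.smul_notMem {S : Set E} (hS : StarConvex ℝ 0 S) {y : E} (hy : y ∉ S) {t : ℝ}
    (ht : 1 ≤ t) : t • y ∉ S := fun h => hy <| by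
  simpa [smul_smul, inv_mul_cancel₀ (zero_lt_one.trans_le ht).ne'] using
    hS.smul_mem h (inv_nonneg.mpr (zero_le_one.trans ht)) (inv_le_one_of_one_le₀ ht)

variable [ProperSpace E]

/-- Shrink `S` into a small ball around `0`, then slide the ball to infinity along the image
under `ψ` of a ray, which avoids `ψ '' S` because `S` is star-shaped. -/
theorem StarConvex.pushableInto_compl {S K : Set E} (hS0 : StarConvex ℝ 0 S) (hS : IsCompact S)
    (hSne : S.Nonempty) (ψ : E ≃ₜ E) (hψS : Disjoint S (ψ '' S)) (hK : IsCompact K) :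
    PushableInto (ψ '' S) S Kᶜ := by
  have h0 : (0 : E) ∈ S := hS0.mem hSne
  set y := ψ.symm 0
  have hy : y ∉ S := fun h => hψS.notMem_of_mem_left h0 ⟨y, h, ψ.apply_symm_apply 0⟩
  have hy0 : y ≠ 0 := fun h => hy (h ▸ h0)
  set T := ψ '' ((fun t : ℝ => t • y) '' Ici 1)
  have hT : IsPreconnected T :=
    (isPreconnected_Ici.image _ (by fun_prop)).image _ ψ.continuous.continuousOn
  have hTS : Disjoint T (ψ '' S) := (disjoint_image_iff ψ.injective).mpr <|
    disjoint_left.mpr fun _ ⟨_, ht, hty⟩ => hty ▸ hS0.smul_notMem hy ht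
  obtain ⟨t, ht, htK⟩ := exists_one_le_smul_notMem hy0 (ψ.isCompact_preimage.mpr hK).isBounded
  obtain ⟨ε, hε, hεK⟩ := Metric.isOpen_iff.mp hK.isClosed.isOpen_compl _ htK
  obtain ⟨ρ, hpush, hρ, hρε⟩ := ((hT.eventually_pushableInto_closedBall
    (hS.image ψ.continuous).isClosed hTS ⟨y, ⟨1, self_mem_Ici, one_smul _ _⟩, ψ.apply_symm_apply 0⟩
    ⟨_, ⟨t, ht, rfl⟩, rfl⟩).and
    (eventually_mem_nhdsWithin.and (nhdsWithin_le_nhds (eventually_lt_nhds hε)))).exists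
  exact ((hS0.pushableInto_closedBall_zero hS hSne (hS.image ψ.continuous).isClosed hψS
    hρ).trans hpush).mono_right ((closedBall_subset_ball hρε).trans hεK)

end Escaping

section EmbeddedBall

variable {d : ℕ}

lemma zero_mem_stdBallSet (d : ℕ) : (0 : EuclideanSpace ℝ (Fin d)) ∈ stdBallSet d :=
  ⟨by simp, fun _ => rfl⟩

lemma starConvex_stdBallSet (d : ℕ) : StarConvex ℝ 0 (stdBallSet d) :=
  starConvex_zero_iff.mpr fun x hx a ha0 ha1 =>
    ⟨by rw [norm_smul, Real.norm_of_nonneg ha0]; exact mul_le_one₀ ha1 (norm_nonneg x) hx.1,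
      fun h => by simp [hx.2 h]⟩

lemma isCompact_stdBallSet (d : ℕ) : IsCompact (stdBallSet d) := by
  refine (isCompact_closedBall 0 1).of_isClosed_subset ?_
    fun x hx => mem_closedBall_zero_iff.mpr hx.1
  simp only [stdBallSet, ofPred_and, ofPred_forall]
  exact (isClosed_le continuous_norm continuous_const).inter
    (isClosed_iInter fun h => isClosed_eq (PiLp.continuous_apply 2 _ _) continuous_const)

theorem IsEmbeddedBall.pushableInto_compl {D D' K : Set (EuclideanSpace ℝ (Fin d))}
    (hD : IsEmbeddedBall D) (hD' : IsEmbeddedBall D') (hdisj : Disjoint D D') (hK : IsCompact K) :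
    PushableInto D' D Kᶜ := by
  obtain ⟨e, rfl⟩ := hD
  obtain ⟨e', rfl⟩ := hD'
  have hdisj' : Disjoint (stdBallSet d) (e'.trans e.symm '' stdBallSet d) := by
    have := (disjoint_image_iff e.symm.injective).mpr hdisj
    simp only [image_image, Homeomorph.symm_apply_apply, image_id'] at this
    exact this
  have h := ((starConvex_stdBallSet d).pushableInto_compl (isCompact_stdBallSet d)
    ⟨0, zero_mem_stdBallSet d⟩ (e'.trans e.symm) hdisj'
    (hK.image e.symm.continuous)).image_homeomorph e
  have hD' : e '' (e'.trans e.symm '' stdBallSet d) = e' '' stdBallSet d := by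
    rw [image_image]; simp
  have hK' : e '' (e.symm '' K)ᶜ = Kᶜ := by rw [e.image_compl, image_image]; simp
  rwa [hD', hK'] at h

end EmbeddedBall

theorem stmt_8_general {d : ℕ}
    (φ : Homeo0 (EuclideanSpace ℝ (Fin d)) →* (ℝ ≃ₜ ℝ))
    (hfix : ∀ x : ℝ, ∃ f : Homeo0 (EuclideanSpace ℝ (Fin d)), φ f x ≠ x)
    {D D' : Set (EuclideanSpace ℝ (Fin d))}
    (hD : IsEmbeddedBall D) (hD' : IsEmbeddedBall D') (hdisj : Disjoint D D') :
    fixSet φ (fixingNbhd D) ∩ fixSet φ (fixingNbhd D') = ∅ := by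
  refine eq_empty_of_forall_notMem fun y ⟨hyD, hyD'⟩ => ?_
  obtain ⟨f, hf⟩ := hfix y
  obtain ⟨K, hK, hfK⟩ := IsotopicToIdC.exists_isCompact_eq_self f.2
  obtain ⟨g, hg, hgD⟩ := hD.pushableInto_compl hD' hdisj hK
  exact hf (apply_eq_self_of_inv_mul_mul_mem hyD hyD' hg
    (inv_mul_mul_mem_fixingNbhd hK.isClosed hfK hgD))

/-- If `φ : Homeo₀(ℝ^d) → Homeo(ℝ)` is a group morphism whose image has no global fixed
point, then for disjoint embedded `(d-1)`-dimensional balls `D`, `D'`,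
`F_D ∩ F_{D'} = ∅`, where `F_D = Fix(φ(H_D^d))`. -/
theorem stmt_8 {d : ℕ} (hd : 1 ≤ d)
    (φ : Homeo0 (EuclideanSpace ℝ (Fin d)) →* (ℝ ≃ₜ ℝ))
    (hfix : ∀ x : ℝ, ∃ f : Homeo0 (EuclideanSpace ℝ (Fin d)), φ f x ≠ x)
    {D D' : Set (EuclideanSpace ℝ (Fin d))}
    (hD : IsEmbeddedBall D) (hD' : IsEmbeddedBall D') (hdisj : Disjoint D D') :
    fixSet φ (fixingNbhd D) ∩ fixSet φ (fixingNbhd D') = ∅ :=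
  stmt_8_general φ hfix hD hD' hdisj
end

section
/- Let d ≥ 1 and let φ : Homeo₀(ℝᵈ) → Homeo(ℝ) be a group homomorphism such that no point of ℝ is fixed by every element of φ(Homeo₀(ℝᵈ)), and suppose the sets F_D = Fix(φ(H_D^d)) are nonempty. Then for every embedded (d−1)-dimensional ball D of ℝᵈ, the set F_D consists of exactly one point. -/
/-!
Write `D = e(B₀)`, where `B_t` is the flat unit ball at height `t` in the last coordinate, and
let `F_t = Fix φ(H_{e(B_t)})`. A compactly supported shear, conjugated by `e`, carries `e(B_p)`
onto `e(B_q)` while fixing a neighbourhood of any `e(B_t)` with `t` outside `[p, q]`. Hence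
`F_q = φ(g)(F_p)`, so if `F_0` had two points then so would every `F_t`. But for `t ≠ t'` no
point of `F_{t'}` lies between two points of `F_t`, so the open intervals spanned by the `F_t`
would form an uncountable disjoint family of nonempty open subsets of `ℝ`.
-/

open Set Filter

section CompactSupport

variable {X : Type*} [TopologicalSpace X] [T2Space X] [WeaklyLocallyCompactSpace X]

theorem isProperMap_of_eq_self_off_compact {f : X → X} (hf : Continuous f) {K : Set X}
    (hK : IsCompact K) (hfK : ∀ x ∉ K, f x = x) : IsProperMap f := by
  refine isProperMap_iff_isCompact_preimage.2 ⟨hf, fun L hL => ?_⟩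
  refine (hK.union hL).of_isClosed_subset (hL.isClosed.preimage hf) fun x hx => ?_
  by_cases hxK : x ∈ K
  · exact Or.inl hxK
  · exact Or.inr (hfK x hxK ▸ hx)

noncomputable def homeomorphOfEqSelfOffCompact (f : X → X) (hf : Continuous f)
    (hb : Function.Bijective f) {K : Set X} (hK : IsCompact K) (hfK : ∀ x ∉ K, f x = x) :
    X ≃ₜ X :=
  (Equiv.ofBijective f hb).toHomeomorphOfContinuousClosed hf
    (isProperMap_of_eq_self_off_compact hf hK hfK).isClosedMap

theorem exists_mem_homeo0_of_isotopy (F : unitInterval → X → X)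
    (hF : Continuous fun p : X × unitInterval => F p.2 p.1)
    (hbij : ∀ t, Function.Bijective (F t)) (hF0 : ∀ x, F 0 x = x) {K : Set X}
    (hK : IsCompact K) (hFK : ∀ t, ∀ x ∉ K, F t x = x) :
    ∃ f ∈ Homeo0 X, ⇑f = F 1 := by
  let G : X × unitInterval → X × unitInterval := fun p => (F p.2 p.1, p.2)
  have hGbij : Function.Bijective G := by
    refine ⟨fun p q hpq => ?_, fun q => ?_⟩
    · obtain ⟨h1 : F p.2 p.1 = F q.2 q.1, h2 : p.2 = q.2⟩ := Prod.ext_iff.1 hpq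
      rw [h2] at h1
      exact Prod.ext ((hbij q.2).1 h1) h2
    · obtain ⟨x, hx⟩ := (hbij q.2).2 q.1
      exact ⟨(x, q.2), Prod.ext hx rfl⟩
  have hGK : ∀ p ∉ K ×ˢ (univ : Set unitInterval), G p = p := fun p hp =>
    Prod.ext (hFK p.2 p.1 fun h => hp ⟨h, trivial⟩) rfl
  let H := homeomorphOfEqSelfOffCompact G (hF.prodMk continuous_snd) hGbij
    (hK.prod isCompact_univ) hGK
  refine ⟨homeomorphOfEqSelfOffCompact (F 1) (hF.comp (Continuous.prodMk_left 1)) (hbij 1)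
    hK (hFK 1), ⟨H, K, hK, fun _ => rfl, fun x => Prod.ext (hF0 x) rfl, fun _ => rfl,
    fun t x hx => Prod.ext (hFK t x hx) rfl⟩, rfl⟩

end CompactSupport

section Homeo0

variable {X : Type*} [TopologicalSpace X]

instance homeo0_normal : (Homeo0 X).Normal where
  conj_mem f hf w := by
    obtain ⟨H, K, hK, hl, h0, h1, hs⟩ := hf
    let W := w.prodCongr (Homeomorph.refl unitInterval)
    refine ⟨(W.symm.trans H).trans W, w '' K, hK.image w.continuous, fun p => hl _,
      fun x => ?_, fun x => ?_, fun t x hx => ?_⟩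
    · simp [W, h0]
    · simp [W, h1]
    · have hx' : w.symm x ∉ K := fun h => hx ⟨_, h, w.apply_symm_apply x⟩
      simp [W, hs t _ hx']

theorem exists_isCompact_mem_fixingNbhd_of_disjoint [T2Space X] (f : Homeo0 X) :
    ∃ K : Set X, IsCompact K ∧ ∀ S, Disjoint S K → f ∈ fixingNbhd S := by
  obtain ⟨H, K, hK, -, -, h1, hs⟩ := f.2
  refine ⟨K, hK, fun S hSK => ⟨Kᶜ, hK.isClosed.isOpen_compl, hSK.subset_compl_right,
    fun x hx => ?_⟩⟩
  simpa [h1] using hs 1 x hx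

theorem fixingNbhd_image (g : Homeo0 X) (S : Set X) :
    fixingNbhd ((g : X ≃ₜ X) '' S) = (fixingNbhd S).map (MulAut.conj g).toMonoidHom := by
  ext f
  rw [Subgroup.mem_map_equiv, MulAut.conj_symm_apply]
  constructor
  · rintro ⟨U, hU, hSU, hf⟩
    refine ⟨(g : X ≃ₜ X) ⁻¹' U, hU.preimage (map_continuous _), fun s hs => hSU ⟨s, hs, rfl⟩,
      fun x hx => ?_⟩
    show (g : X ≃ₜ X).symm ((f : X ≃ₜ X) ((g : X ≃ₜ X) x)) = x
    rw [hf _ hx, Homeomorph.symm_apply_apply]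
  · rintro ⟨U, hU, hSU, hf⟩
    refine ⟨(g : X ≃ₜ X) '' U, (g : X ≃ₜ X).isOpen_image.2 hU, image_mono hSU, ?_⟩
    rintro _ ⟨x, hx, rfl⟩
    have : (g : X ≃ₜ X).symm ((f : X ≃ₜ X) ((g : X ≃ₜ X) x)) = x := hf x hx
    exact (g : X ≃ₜ X).symm_apply_eq.1 this

end Homeo0

theorem fixSet_map_conj {G Y : Type*} [Group G] [TopologicalSpace Y] (φ : G →* (Y ≃ₜ Y))
    (H : Subgroup G) (g : G) :
    fixSet φ (H.map (MulAut.conj g).toMonoidHom) = φ g '' fixSet φ H := by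
  ext y
  simp only [fixSet, Subgroup.mem_map_equiv, MulAut.conj_symm_apply, mem_ofPred_eq, mem_image]
  constructor
  · intro hy
    refine ⟨(φ g).symm y, fun f hf => ?_, (φ g).apply_symm_apply y⟩
    have hy' := hy (g * f * g⁻¹) (by simpa [mul_assoc] using hf)
    rw [map_mul, map_mul, map_inv] at hy'
    exact (φ g).eq_symm_apply.2 hy'
  · rintro ⟨z, hz, rfl⟩ f hf
    have hz' := hz _ hf
    rw [map_mul, map_mul, map_inv] at hz'
    exact (φ g).symm_apply_eq.1 hz'

theorem fixSet_fixingNbhd_image {X Y : Type*} [TopologicalSpace X] [TopologicalSpace Y]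
    (φ : Homeo0 X →* (Y ≃ₜ Y)) (g : Homeo0 X) (S : Set X) :
    fixSet φ (fixingNbhd ((g : X ≃ₜ X) '' S)) = φ g '' fixSet φ (fixingNbhd S) := by
  rw [fixingNbhd_image, fixSet_map_conj]

theorem Homeomorph.mapsTo_Icc_of_apply_eq (f : ℝ ≃ₜ ℝ) {p q : ℝ} (hp : f p = p)
    (hq : f q = q) : MapsTo f (Icc p q) (Icc p q) := by
  intro y ⟨hpy, hyq⟩
  rcases (hpy.trans hyq).eq_or_lt with rfl | hpq
  · obtain rfl : y = p := le_antisymm hyq hpy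
    simp [hp]
  rcases f.continuous.strictMono_of_inj f.injective with hmono | hanti
  · exact ⟨hp ▸ hmono.monotone hpy, hq ▸ hmono.monotone hyq⟩
  · exact absurd (hanti hpq) (by rw [hp, hq]; exact hpq.not_gt)

theorem exists_forall_apply_eq_of_eventually {G Y ι : Type*} [Group G] [TopologicalSpace Y]
    [T2Space Y] (φ : G →* (Y ≃ₜ Y)) {l : Filter ι} [l.NeBot] {K : Set Y} (hK : IsCompact K)
    {x : ι → Y} (hxK : ∀ᶠ i in l, x i ∈ K) (hx : ∀ f, ∀ᶠ i in l, φ f (x i) = x i) :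
    ∃ y, ∀ f, φ f y = y := by
  let U := Ultrafilter.of (map x l)
  have hUl : (U : Filter Y) ≤ map x l := Ultrafilter.of_le _
  obtain ⟨y, -, hy⟩ := hK.ultrafilter_le_nhds U (hUl.trans (tendsto_principal.2 hxK))
  refine ⟨y, fun f => tendsto_nhds_unique ?_ hy⟩
  have hfU : ∀ᶠ z in (U : Filter Y), φ f z = z := hUl (hx f)
  exact ((φ f).continuous.tendsto y).comp hy |>.congr' hfU

section Ramp

/-- The piecewise affine map of `ℝ` which is the identity off `(m, M)` and sends `p` to
`p + r`. -/
noncomputable def ramp (r m p M s : ℝ) : ℝ :=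
  max s (min (s + r * ((s - m) / (p - m))) (s + r * ((M - s) / (M - p))))

variable {r m p M s : ℝ}

theorem ramp_strictMono (hm : m < p) (hr : 0 ≤ r) (hrM : r < M - p) :
    StrictMono (ramp r m p M) := by
  have hleft : StrictMono fun s => s + r * ((s - m) / (p - m)) := by
    intro s₁ s₂ h
    have : r * ((s₁ - m) / (p - m)) ≤ r * ((s₂ - m) / (p - m)) := by
      gcongr
    simp only; linarith
  have hright : StrictMono fun s => s + r * ((M - s) / (M - p)) := by
    intro s₁ s₂ h
    have hMp : 0 < M - p := by linarith
    have : r * ((M - s₁) / (M - p)) - r * ((M - s₂) / (M - p)) = r / (M - p) * (s₂ - s₁) := by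
      field_simp; ring
    have : r / (M - p) * (s₂ - s₁) < 1 * (s₂ - s₁) :=
      mul_lt_mul_of_pos_right ((div_lt_one hMp).2 hrM) (by linarith)
    simp only; linarith
  exact fun s₁ s₂ h => max_lt_max h (min_lt_min (hleft h) (hright h))

theorem ramp_eq_self (hr : 0 ≤ r) (hm : m < p) (hM : p < M) (hs : s ∉ Ioo m M) :
    ramp r m p M s = s := by
  refine max_eq_left ?_
  rcases not_and_or.1 hs with hs | hs <;> push Not at hs
  · have : r * ((s - m) / (p - m)) ≤ 0 :=
      mul_nonpos_of_nonneg_of_nonpos hr (div_nonpos_of_nonpos_of_nonneg (by linarith) (by linarith))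
    exact (min_le_left _ _).trans (by linarith)
  · have : r * ((M - s) / (M - p)) ≤ 0 :=
      mul_nonpos_of_nonneg_of_nonpos hr (div_nonpos_of_nonpos_of_nonneg (by linarith) (by linarith))
    exact (min_le_right _ _).trans (by linarith)

theorem ramp_self (hr : 0 ≤ r) (hm : m < p) (hM : p < M) : ramp r m p M p = p + r := by
  simp [ramp, div_self (sub_pos.2 hm).ne', div_self (sub_pos.2 hM).ne', hr]

@[simp]
theorem ramp_zero_left : ramp 0 m p M s = s := by
  simp [ramp]

theorem continuous_ramp : Continuous fun q : ℝ × ℝ => ramp q.1 m p M q.2 := by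
  unfold ramp
  fun_prop

theorem ramp_surjective (hm : m < p) (hM : p < M) (hr : 0 ≤ r) :
    Function.Surjective (ramp r m p M) := by
  have hcont : Continuous (ramp r m p M) :=
    continuous_ramp.comp (Continuous.prodMk_right r)
  intro y
  by_cases hy : y ∈ Ioo m M
  · have := intermediate_value_Icc (hm.trans hM).le hcont.continuousOn
    rw [ramp_eq_self hr hm hM (by simp), ramp_eq_self hr hm hM (by simp)] at this
    obtain ⟨s, -, hs⟩ := this (Ioo_subset_Icc_self hy)
    exact ⟨s, hs⟩
  · exact ⟨y, ramp_eq_self hr hm hM hy⟩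

end Ramp

section Shear

variable {d : ℕ}

local notation "E" => EuclideanSpace ℝ (Fin d)

noncomputable def horiz (j : Fin d) (x : E) : E :=
  x - x j • EuclideanSpace.single j 1

variable {j : Fin d}

@[simp]
theorem horiz_apply_self (x : E) : horiz j x j = 0 := by
  simp [horiz]

theorem horiz_add_smul_single (x : E) (s : ℝ) :
    horiz j (x + s • EuclideanSpace.single j 1) = horiz j x := by
  ext i
  by_cases hij : i = j
  · subst hij; simp [horiz]
  · simp [horiz, hij]

@[simp]
theorem horiz_horiz (x : E) : horiz j (horiz j x) = horiz j x := by
  simp [horiz]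

theorem horiz_add_apply_smul_single (x : E) : horiz j x + x j • EuclideanSpace.single j 1 = x :=
  sub_add_cancel _ _

theorem eq_of_horiz_eq_of_apply_eq {x y : E} (h : horiz j x = horiz j y) (hj : x j = y j) :
    x = y := by
  rw [← horiz_add_apply_smul_single x, h, hj, horiz_add_apply_smul_single]

theorem continuous_horiz : Continuous (horiz j : E → E) :=
  continuous_id.sub ((EuclideanSpace.proj j).continuous.smul continuous_const)

theorem norm_le_norm_horiz_add_abs (x : E) : ‖x‖ ≤ ‖horiz j x‖ + |x j| := by
  conv_lhs => rw [← horiz_add_apply_smul_single (j := j) x]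
  refine (norm_add_le _ _).trans_eq ?_
  simp [norm_smul]

def flatBall (j : Fin d) (t : ℝ) : Set E :=
  {x | x j = t ∧ ‖horiz j x‖ ≤ 1}

theorem stdBallSet_eq_flatBall (hd : 1 ≤ d) : stdBallSet d = flatBall ⟨d - 1, by omega⟩ 0 := by
  ext x
  simp only [stdBallSet, flatBall, horiz, mem_ofPred_eq]
  constructor
  · rintro ⟨hx, hx0⟩
    simpa [hx0 (by omega)] using hx
  · rintro ⟨hx0, hx⟩
    exact ⟨by simpa [hx0] using hx, fun _ => hx0⟩

theorem eventually_disjoint_image_flatBall (e : E ≃ₜ E) (j : Fin d) {K : Set E}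
    (hK : IsCompact K) : ∀ᶠ t in cocompact ℝ, Disjoint (e '' flatBall j t) K := by
  have hL : IsCompact ((fun x : E => x j) '' (e.symm '' K)) :=
    (hK.image e.symm.continuous).image (EuclideanSpace.proj j).continuous
  filter_upwards [hL.compl_mem_cocompact] with t ht
  refine disjoint_left.2 ?_
  rintro _ ⟨x, hx, rfl⟩ hxK
  exact ht ⟨x, ⟨e x, hxK, e.symm_apply_apply x⟩, hx.1⟩

noncomputable def cutoff (u : ℝ) : ℝ :=
  max 0 (min 1 (2 - u))

theorem cutoff_mem_Icc (u : ℝ) : cutoff u ∈ Icc 0 1 :=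
  ⟨le_max_left _ _, max_le zero_le_one (min_le_left _ _)⟩

theorem cutoff_of_le_one {u : ℝ} (h : u ≤ 1) : cutoff u = 1 := by
  simp [cutoff, min_eq_left (by linarith : (1 : ℝ) ≤ 2 - u)]

theorem cutoff_of_two_le {u : ℝ} (h : 2 ≤ u) : cutoff u = 0 :=
  max_eq_left (min_le_of_right_le (by linarith))

theorem continuous_cutoff : Continuous cutoff := by
  unfold cutoff
  fun_prop

noncomputable def shear (j : Fin d) (r m p M : ℝ) (x : E) : E :=
  horiz j x + ramp (r * cutoff ‖horiz j x‖) m p M (x j) • EuclideanSpace.single j 1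

variable {r m p M : ℝ}

@[simp]
theorem horiz_shear (x : E) : horiz j (shear j r m p M x) = horiz j x := by
  rw [shear, horiz_add_smul_single]
  ext i
  by_cases hij : i = j
  · subst hij; simp
  · simp [horiz, hij]

@[simp]
theorem shear_apply_self (x : E) :
    shear j r m p M x j = ramp (r * cutoff ‖horiz j x‖) m p M (x j) := by
  simp [shear]

@[simp]
theorem shear_zero (x : E) : shear j 0 m p M x = x := by
  simp [shear, horiz_add_apply_smul_single]

theorem mul_cutoff_mem_Icc (hr : 0 ≤ r) (u : ℝ) : r * cutoff u ∈ Icc 0 r := by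
  obtain ⟨h0, h1⟩ := cutoff_mem_Icc u
  exact ⟨mul_nonneg hr h0, mul_le_of_le_one_right hr h1⟩

theorem shear_bijective (hm : m < p) (hr : 0 ≤ r) (hrM : r < M - p) :
    Function.Bijective (shear j r m p M) := by
  have hcoef (u : ℝ) := mul_cutoff_mem_Icc hr u
  refine ⟨fun x y hxy => ?_, fun y => ?_⟩
  · have hh : horiz j x = horiz j y := by simpa using congrArg (horiz j) hxy
    have hj := congrArg (· j) hxy
    simp only [shear_apply_self, hh] at hj
    exact eq_of_horiz_eq_of_apply_eq hh
      ((ramp_strictMono hm (hcoef _).1 ((hcoef _).2.trans_lt hrM)).injective hj)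
  · obtain ⟨s, hs⟩ := ramp_surjective hm (by linarith) (hcoef ‖horiz j y‖).1 (y j)
    refine ⟨horiz j y + s • EuclideanSpace.single j 1, eq_of_horiz_eq_of_apply_eq (j := j) ?_ ?_⟩
    · simp [horiz_add_smul_single]
    · simpa [horiz_add_smul_single] using hs

theorem continuous_shear : Continuous fun q : E × ℝ => shear j q.2 m p M q.1 := by
  have hh : Continuous fun q : E × ℝ => horiz j q.1 := continuous_horiz.comp continuous_fst
  have hramp : Continuous fun q : E × ℝ => ramp (q.2 * cutoff ‖horiz j q.1‖) m p M (q.1 j) :=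
    continuous_ramp.comp ((continuous_snd.mul (continuous_cutoff.comp hh.norm)).prodMk
      ((EuclideanSpace.proj j).continuous.comp continuous_fst))
  exact hh.add (hramp.smul continuous_const)

theorem shear_eq_self_of_apply_notMem_Ioo (hr : 0 ≤ r) (hm : m < p) (hM : p < M) {x : E}
    (hx : x j ∉ Ioo m M) : shear j r m p M x = x := by
  rw [shear, ramp_eq_self (mul_cutoff_mem_Icc hr _).1 hm hM hx, horiz_add_apply_smul_single]

theorem shear_eq_self_of_notMem_closedBall (hr : 0 ≤ r) (hm : m < p) (hM : p < M) {x : E}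
    (hx : x ∉ Metric.closedBall 0 (|m| + |M| + 2)) : shear j r m p M x = x := by
  rw [Metric.mem_closedBall, dist_zero_right, not_le] at hx
  by_cases hh : 2 ≤ ‖horiz j x‖
  · simp [shear, cutoff_of_two_le hh, horiz_add_apply_smul_single]
  · refine shear_eq_self_of_apply_notMem_Ioo hr hm hM fun hxj => ?_
    have := norm_le_norm_horiz_add_abs (j := j) x
    have : |x j| < |m| + |M| := by
      rw [abs_lt]
      constructor <;>
        linarith [neg_abs_le m, le_abs_self M, abs_nonneg m, abs_nonneg M, hxj.1, hxj.2]
    linarith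

theorem image_shear_flatBall (hr : 0 ≤ r) (hm : m < p) (hM : p < M) :
    shear j r m p M '' flatBall j p = flatBall j (p + r) := by
  have hball : ∀ x ∈ flatBall j p, shear j r m p M x j = p + r := fun x ⟨hxp, hx⟩ => by
    rw [shear_apply_self, cutoff_of_le_one hx, mul_one, hxp, ramp_self hr hm hM]
  refine Subset.antisymm ?_ fun y ⟨hy, hy'⟩ => ?_
  · rintro _ ⟨x, hx, rfl⟩
    exact ⟨hball x hx, by simpa using hx.2⟩
  · have hx : horiz j y + p • EuclideanSpace.single j 1 ∈ flatBall j p := by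
      simpa [flatBall, horiz_add_smul_single] using hy'
    refine ⟨_, hx, eq_of_horiz_eq_of_apply_eq ?_ (by rw [hball _ hx, hy])⟩
    simp [horiz_add_smul_single]

end Shear

section Slide

variable {d : ℕ}

local notation "E" => EuclideanSpace ℝ (Fin d)

theorem exists_homeo0_image_flatBall (j : Fin d) {m p q M : ℝ} (hm : m < p) (hpq : p ≤ q)
    (hM : q < M) :
    ∃ g ∈ Homeo0 E, g '' flatBall j p = flatBall j q ∧ ∀ x, x j ∉ Ioo m M → g x = x := by
  have hr : 0 ≤ q - p := sub_nonneg.2 hpq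
  have hpM : p < M := hpq.trans_lt hM
  have htr (t : unitInterval) : (t : ℝ) * (q - p) ∈ Icc 0 (q - p) :=
    ⟨mul_nonneg t.2.1 hr, mul_le_of_le_one_left hr t.2.2⟩
  obtain ⟨g, hg, hg1⟩ := exists_mem_homeo0_of_isotopy (fun t => shear j (t * (q - p)) m p M)
    (continuous_shear.comp (continuous_fst.prodMk
      ((continuous_subtype_val.comp continuous_snd).mul continuous_const)))
    (fun t => shear_bijective hm (htr t).1 ((htr t).2.trans_lt (by linarith)))
    (fun x => by simp) (isCompact_closedBall 0 (|m| + |M| + 2))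
    (fun t x hx => shear_eq_self_of_notMem_closedBall (htr t).1 hm hpM hx)
  refine ⟨g, hg, ?_, fun x hx => ?_⟩
  · simpa [hg1] using image_shear_flatBall (j := j) hr hm hpM
  · simpa [hg1] using shear_eq_self_of_apply_notMem_Ioo hr hm hpM hx

theorem mem_fixingNbhd_flatBall {j : Fin d} {m M t : ℝ} {g : Homeo0 E}
    (hg : ∀ x, x j ∉ Ioo m M → (g : E ≃ₜ E) x = x) (ht : t ∉ Icc m M) :
    g ∈ fixingNbhd (flatBall j t) :=
  ⟨{x | x j ∉ Icc m M}, (isClosed_Icc.preimage (EuclideanSpace.proj j).continuous).isOpen_compl,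
    fun x hx => by simpa [hx.1] using ht, fun x hx => hg x fun h => hx (Ioo_subset_Icc_self h)⟩

theorem exists_image_flatBall_mem_fixingNbhd (j : Fin d) {p q t : ℝ} (ht : t ∉ uIcc p q) :
    ∃ g : Homeo0 E, (g : E ≃ₜ E) '' flatBall j p = flatBall j q ∧
      g ∈ fixingNbhd (flatBall j t) := by
  wlog hpq : p ≤ q generalizing p q
  · obtain ⟨g, hgpq, hgt⟩ := this (uIcc_comm p q ▸ ht) (le_of_not_ge hpq)
    refine ⟨g⁻¹, ?_, inv_mem hgt⟩
    rw [← hgpq]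
    exact (g : E ≃ₜ E).symm_image_image _
  obtain ⟨m, M, hm, hM, htmM⟩ : ∃ m M, m < p ∧ q < M ∧ t ∉ Icc m M := by
    rw [uIcc_of_le hpq, mem_Icc, not_and_or, not_le, not_le] at ht
    rcases ht with ht | ht
    · exact ⟨(t + p) / 2, q + 1, by linarith, by linarith, fun h => by linarith [h.1]⟩
    · exact ⟨p - 1, (q + t) / 2, by linarith, by linarith, fun h => by linarith [h.2]⟩
  obtain ⟨g, hg, hgpq, hgfix⟩ := exists_homeo0_image_flatBall j hm hpq hM
  exact ⟨⟨g, hg⟩, hgpq, mem_fixingNbhd_flatBall hgfix htmM⟩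

theorem exists_image_image_flatBall_mem_fixingNbhd (e : E ≃ₜ E) (j : Fin d) {p q t : ℝ}
    (ht : t ∉ uIcc p q) :
    ∃ g : Homeo0 E, (g : E ≃ₜ E) '' (e '' flatBall j p) = e '' flatBall j q ∧
      g ∈ fixingNbhd (e '' flatBall j t) := by
  obtain ⟨g, hgpq, U, hU, htU, hgU⟩ := exists_image_flatBall_mem_fixingNbhd j ht
  refine ⟨⟨e * g * e⁻¹, homeo0_normal.conj_mem _ g.2 e⟩, ?_,
    e '' U, e.isOpen_image.2 hU, image_mono htU, ?_⟩
  · rw [← hgpq]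
    ext
    simp
  · rintro _ ⟨x, hx, rfl⟩
    show e ((g : E ≃ₜ E) (e.symm (e x))) = e x
    rw [e.symm_apply_apply, hgU x hx]

end Slide

section ParallelBalls

variable {d : ℕ} (φ : Homeo0 (EuclideanSpace ℝ (Fin d)) →* (ℝ ≃ₜ ℝ))
  (e : EuclideanSpace ℝ (Fin d) ≃ₜ EuclideanSpace ℝ (Fin d)) (j : Fin d)

theorem exists_fixSet_flatBall_eq_image (p q : ℝ) :
    ∃ g, fixSet φ (fixingNbhd (e '' flatBall j q)) =
      φ g '' fixSet φ (fixingNbhd (e '' flatBall j p)) := by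
  obtain ⟨g, hg, -⟩ := exists_image_image_flatBall_mem_fixingNbhd e j
    (t := min p q - 1) fun h => by linarith [h.1]
  exact ⟨g, by rw [← hg, fixSet_fixingNbhd_image]⟩

theorem exists_seq_image_flatBall_tendsto_cocompact {t t' : ℝ} (htt' : t ≠ t') :
    ∃ g : ℕ → Homeo0 (EuclideanSpace ℝ (Fin d)), ∃ s : ℕ → ℝ,
      Tendsto s atTop (cocompact ℝ) ∧ ∀ n, (g n : _ ≃ₜ _) '' (e '' flatBall j t') =
        e '' flatBall j (s n) ∧ g n ∈ fixingNbhd (e '' flatBall j t) := by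
  have hs (n : ℕ) : t ∉ uIcc t' (t' + n * (t' - t)) := by
    have hn : (0 : ℝ) ≤ n := n.cast_nonneg
    rw [mem_uIcc]
    rintro (⟨h1, h2⟩ | ⟨h1, h2⟩)
    · exact htt' (le_antisymm (by nlinarith) h1)
    · exact htt' (le_antisymm h2 (by nlinarith))
  choose g hg using fun n => exists_image_image_flatBall_mem_fixingNbhd e j (hs n)
  refine ⟨g, _, tendsto_cocompact_of_tendsto_dist_comp_atTop t' ?_, hg⟩
  simpa [Real.dist_eq, abs_mul] using
    tendsto_natCast_atTop_atTop.atTop_mul_const (abs_pos.2 (sub_ne_zero.2 htt'.symm))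

/-- Sliding the ball at height `t'` off to infinity while fixing a neighbourhood of the one at
height `t` keeps the images of `y` in `[p, q]`, where they accumulate at a global fixed point. -/
theorem notMem_Icc_of_mem_fixSet_flatBall (hfix : ∀ x, ∃ f, φ f x ≠ x) {t t' p q y : ℝ}
    (htt' : t ≠ t') (hp : p ∈ fixSet φ (fixingNbhd (e '' flatBall j t)))
    (hq : q ∈ fixSet φ (fixingNbhd (e '' flatBall j t)))
    (hy : y ∈ fixSet φ (fixingNbhd (e '' flatBall j t'))) : y ∉ Icc p q := by
  intro hyI
  obtain ⟨g, s, hs, hg⟩ := exists_seq_image_flatBall_tendsto_cocompact e j htt'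
  have hgy (n : ℕ) : φ (g n) y ∈ fixSet φ (fixingNbhd (e '' flatBall j (s n))) := by
    rw [← (hg n).1, fixSet_fixingNbhd_image]
    exact mem_image_of_mem _ hy
  obtain ⟨L, hL⟩ := exists_forall_apply_eq_of_eventually φ (l := atTop) isCompact_Icc
    (Eventually.of_forall fun n =>
      (φ (g n)).mapsTo_Icc_of_apply_eq (hp _ (hg n).2) (hq _ (hg n).2) hyI)
    fun f => by
      obtain ⟨K, hK, hfK⟩ := exists_isCompact_mem_fixingNbhd_of_disjoint f
      filter_upwards [hs.eventually (eventually_disjoint_image_flatBall e j hK)] with n hn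
      exact hgy n f (hfK _ hn)
  obtain ⟨f, hf⟩ := hfix L
  exact hf (hL f)

end ParallelBalls

/-- Suppose `φ : Homeo₀(ℝ^d) → Homeo(ℝ)` has no global fixed point and all the sets
`F_D = Fix(φ(H_D^d))` (for `D` an embedded `(d-1)`-ball) are nonempty. Then each set
`F_D` contains exactly one point. -/
theorem stmt_10 {d : ℕ} (hd : 1 ≤ d)
    (φ : Homeo0 (EuclideanSpace ℝ (Fin d)) →* (ℝ ≃ₜ ℝ))
    (hfix : ∀ x : ℝ, ∃ f : Homeo0 (EuclideanSpace ℝ (Fin d)), φ f x ≠ x)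
    (hne : ∀ D : Set (EuclideanSpace ℝ (Fin d)), IsEmbeddedBall D →
      (fixSet φ (fixingNbhd D)).Nonempty)
    (D : Set (EuclideanSpace ℝ (Fin d))) (hD : IsEmbeddedBall D) :
    ∃ x : ℝ, fixSet φ (fixingNbhd D) = {x} := by
  obtain ⟨x₀, hx₀⟩ := hne D hD
  obtain ⟨e, rfl⟩ := hD
  set j : Fin d := ⟨d - 1, by omega⟩
  rw [stdBallSet_eq_flatBall hd] at hx₀ ⊢
  refine ⟨x₀, eq_singleton_iff_unique_mem.2 ⟨hx₀, fun y hy => by_contra fun hyx => ?_⟩⟩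
  have hF0 : (fixSet φ (fixingNbhd (e '' flatBall j 0))).Nontrivial := ⟨y, hy, x₀, hx₀, hyx⟩
  have hF (t : ℝ) : (fixSet φ (fixingNbhd (e '' flatBall j t))).Nontrivial := by
    obtain ⟨g, hg⟩ := exists_fixSet_flatBall_eq_image φ e j 0 t
    rw [hg]
    exact hF0.image (φ g).injective
  choose a ha b hb hab using fun t => (hF t).exists_lt
  have hdisj : (univ : Set ℝ).PairwiseDisjoint fun t => Ioo (a t) (b t) := by
    intro t _ t' _ htt'
    refine disjoint_left.2 fun z hz hz' => ?_
    rcases le_total (a t) (a t') with h | h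
    · exact notMem_Icc_of_mem_fixSet_flatBall φ e j hfix htt' (ha t) (hb t) (ha t')
        ⟨h, (hz'.1.trans hz.2).le⟩
    · exact notMem_Icc_of_mem_fixSet_flatBall φ e j hfix htt'.symm (ha t') (hb t') (ha t)
        ⟨h, (hz.1.trans hz'.2).le⟩
  exact Cardinal.not_countable_real
    (hdisj.countable_of_isOpen (fun _ _ => isOpen_Ioo) fun t _ => nonempty_Ioo.2 (hab t))
end

section
/- Let ψ : Homeo_ℤ(ℝ) → Homeo₊(ℝ) be a group homomorphism and let t ∈ Homeo_ℤ(ℝ) be the translation x ↦ x+1 (a generator of the center of Homeo_ℤ(ℝ)). Then every connected component of ℝ \ Fix(ψ(t)) is preserved (setwise) by ψ(f) for all f ∈ Homeo_ℤ(ℝ), and Fix(ψ(Homeo_ℤ(ℝ))) = Fix(ψ(t)). -/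
/-- `Homeo_ℤ(ℝ)`: the group of homeomorphisms `f` of `ℝ` with `f (x + 1) = f x + 1`
for all `x`. -/
def HomeoZ : Subgroup (ℝ ≃ₜ ℝ) where
  carrier := {f | ∀ x : ℝ, f (x + 1) = f x + 1}
  one_mem' := fun _ => rfl
  mul_mem' := by
    intro f g hf hg x
    show f (g (x + 1)) = f (g x) + 1
    rw [hg, hf]
  inv_mem' := by
    intro f hf x
    apply f.injective
    show f (f.symm (x + 1)) = f (f.symm x + 1)
    rw [hf, f.apply_symm_apply, f.apply_symm_apply]

/-- `Homeo₊(ℝ)`: the group of orientation-preserving (strictly increasing)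
homeomorphisms of `ℝ`. -/
def HomeoPlus : Subgroup (ℝ ≃ₜ ℝ) where
  carrier := {f | StrictMono f}
  one_mem' := strictMono_id
  mul_mem' := fun hf hg => hf.comp hg
  inv_mem' := by
    intro f hf a b hab
    show f.symm a < f.symm b
    rw [← hf.lt_iff_lt, f.apply_symm_apply, f.apply_symm_apply]
    exact hab

/-- The translation `x ↦ x + 1`, as an element of `Homeo_ℤ(ℝ)` (a generator of its
center). -/
def tOne : HomeoZ :=
  ⟨Homeomorph.addRight (1 : ℝ), fun x => rfl⟩

/-! Since `t` is central, every `ψ f` preserves `Fix (ψ t)`, so the `f` for which `ψ f` fixes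
`Fix (ψ t)` pointwise form a normal subgroup `N`. It contains the rational translations
`x ↦ x + m / n`, because `n`-th roots of `t ^ m` act by increasing maps whose `n`-th power fixes
`Fix (ψ t)`. A normal subgroup of `Homeo_ℤ(ℝ)` containing them is everything. A conjugate of
one translation times another gives a *bump*: an element fixing `ℤ` and pushing `(0, 1)`
upwards. Any two bumps are conjugate, through fundamental domains of their actions on `(0, 1)`.
Every `f` fixing `0` is a quotient of two elements lying above the identity, and `g ≥ id` is the
quotient of the bumps `g * bump` and `bump`. Conjugating by translations handles every `f` with
a fixed point, and the intermediate value theorem handles the remaining translations. Finally an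
increasing map fixing `Fix (ψ t)` pointwise maps each interval of the complement into itself. -/

open Set

namespace Homeomorph

variable {X : Type*} [TopologicalSpace X]

lemma coe_pow_eq_iterate (f : X ≃ₜ X) (n : ℕ) : ⇑(f ^ n) = (⇑f)^[n] := by
  induction n with
  | zero => rfl
  | succ n ih => rw [pow_succ, Function.iterate_succ, ← ih]; rfl

lemma zpow_apply_zpow_apply (f : X ≃ₜ X) (m n : ℤ) (x : X) :
    (f ^ m) ((f ^ n) x) = (f ^ (m + n)) x := by
  rw [zpow_add]; rfl

lemma zpow_add_one_apply (f : X ≃ₜ X) (n : ℤ) (x : X) : (f ^ (n + 1)) x = f ((f ^ n) x) := by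
  rw [add_comm, zpow_one_add]; rfl

lemma zpow_apply_eq_self {f : X ≃ₜ X} {x : X} (h : f x = x) (n : ℤ) : (f ^ n) x = x := by
  induction n using Int.induction_on with
  | zero => rfl
  | succ k ih => rw [zpow_add_one, mul_apply, h, ih]
  | pred k ih => rw [zpow_sub_one, mul_apply, inv_apply, (symm_apply_eq f).2 h.symm, ih]

lemma apply_eq_self_of_pow_apply_eq_self [LinearOrder X] {f : X ≃ₜ X} (hf : StrictMono f)
    {n : ℕ} (hn : n ≠ 0) {x : X} (h : (f ^ n) x = x) : f x = x := by
  have := (Function.Commute.id_left (f := ⇑f)).iterate_pos_eq_iff_map_eq monotone_id hf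
    (Nat.pos_of_ne_zero hn) (x := x)
  rw [Function.iterate_id, ← coe_pow_eq_iterate] at this
  exact (this.1 h.symm).symm

lemma strictMono_zpow {f : ℝ ≃ₜ ℝ} (hf : StrictMono f) (n : ℤ) : StrictMono ⇑(f ^ n) :=
  HomeoPlus.zpow_mem hf n

end Homeomorph

lemma image_connectedComponentIn_compl_of_fixed {X : Type*} [TopologicalSpace X]
    [ConditionallyCompleteLinearOrder X] [DenselyOrdered X] [OrderTopology X]
    {g : X ≃ₜ X} (hg : Monotone g) {S : Set X} (hS : ∀ y ∈ S, g y = y) {x : X} (hx : x ∉ S) :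
    g '' connectedComponentIn Sᶜ x = connectedComponentIn Sᶜ x := by
  have hgS : g '' Sᶜ = Sᶜ := by
    rw [g.image_compl, (image_congr hS).trans (image_id S)]
  have hseg : uIcc x (g x) ⊆ Sᶜ := by
    intro z hz hzS
    have hzx : z = g x := by
      rcases le_total x (g x) with h | h
      · rw [uIcc_of_le h] at hz
        exact le_antisymm hz.2 (hS z hzS ▸ hg hz.1)
      · rw [uIcc_of_ge h] at hz
        exact le_antisymm (hS z hzS ▸ hg hz.2) hz.1
    have hgx : g x = x := g.injective (hzx ▸ hS z hzS)
    exact hx (hgx ▸ hzx ▸ hzS)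
  rw [g.image_connectedComponentIn hx, hgS]
  exact (connectedComponentIn_eq
    (isPreconnected_uIcc.subset_connectedComponentIn left_mem_uIcc hseg right_mem_uIcc)).symm

section FixingFixedPoints

variable {G X : Type*} [Group G] [TopologicalSpace X]

def fixingFixedPoints (φ : G →* (X ≃ₜ X)) (z : G) : Subgroup G where
  carrier := {g | ∀ x, φ z x = x → φ g x = x}
  one_mem' _ _ := by rw [map_one]; rfl
  mul_mem' hg hh x hx := by rw [map_mul, Homeomorph.mul_apply, hh x hx, hg x hx]
  inv_mem' hg x hx := by
    rw [map_inv, Homeomorph.inv_apply, Homeomorph.symm_apply_eq, hg x hx]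

lemma fixingFixedPoints_normal (φ : G →* (X ≃ₜ X)) {z : G} (hz : ∀ g, Commute g z) :
    (fixingFixedPoints φ z).Normal where
  conj_mem g hg p x hx := by
    have hpx : ∀ p : G, φ z (φ p x) = φ p x := fun p => by
      rw [← Homeomorph.mul_apply, ← map_mul, ← (hz p).eq, map_mul, Homeomorph.mul_apply, hx]
    rw [map_mul, map_mul, Homeomorph.mul_apply, Homeomorph.mul_apply, hg _ (hpx p⁻¹),
      ← Homeomorph.mul_apply, ← map_mul, mul_inv_cancel, map_one, Homeomorph.one_apply]

lemma mem_fixingFixedPoints_of_pow_eq [LinearOrder X] {φ : G →* (X ≃ₜ X)}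
    (hφ : ∀ g, StrictMono (φ g)) {z g : G} {n : ℕ} (hn : n ≠ 0) {m : ℤ} (h : g ^ n = z ^ m) :
    g ∈ fixingFixedPoints φ z := fun x hx =>
  Homeomorph.apply_eq_self_of_pow_apply_eq_self (hφ g) hn <| by
    rw [← map_pow, h, map_zpow, Homeomorph.zpow_apply_eq_self hx]

end FixingFixedPoints

lemma half_mem_Ioo : (1 / 2 : ℝ) ∈ Ioo (0 : ℝ) 1 := ⟨by norm_num, by norm_num⟩

lemma mem_Ico_iff_eq_zero_or_mem_Ioo {x : ℝ} :
    x ∈ Ico (0 : ℝ) 1 ↔ x = 0 ∨ x ∈ Ioo (0 : ℝ) 1 := by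
  rw [← Ioo_insert_left zero_lt_one, mem_insert_iff]

namespace HomeoZ

lemma apply_add_intCast {f : ℝ → ℝ} (hf : ∀ x, f (x + 1) = f x + 1) (x : ℝ) (n : ℤ) :
    f (x + n) = f x + n := by
  induction n using Int.induction_on with
  | zero => simp
  | succ k ih =>
    push_cast at ih ⊢
    rw [← add_assoc, hf, ih, add_assoc]
  | pred k ih =>
    push_cast at ih ⊢
    have h := hf (x + (-k - 1))
    rw [show x + (-(k : ℝ) - 1) + 1 = x + -k by ring, ih] at h
    linarith

lemma map_add_one (f : HomeoZ) (x : ℝ) : (f : ℝ ≃ₜ ℝ) (x + 1) = (f : ℝ ≃ₜ ℝ) x + 1 := f.2 x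

lemma map_add_intCast (f : HomeoZ) (x : ℝ) (n : ℤ) :
    (f : ℝ ≃ₜ ℝ) (x + n) = (f : ℝ ≃ₜ ℝ) x + n :=
  apply_add_intCast f.2 x n

lemma strictMono (f : HomeoZ) : StrictMono (f : ℝ ≃ₜ ℝ) := by
  refine ((f : ℝ ≃ₜ ℝ).continuous.strictMono_of_inj (f : ℝ ≃ₜ ℝ).injective).resolve_right
    fun hanti => ?_
  have := hanti (zero_lt_one' ℝ)
  rw [← zero_add 1, map_add_one] at this
  linarith

lemma commute_tOne (f : HomeoZ) : Commute f tOne :=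
  Subtype.ext <| Homeomorph.ext (map_add_one f)

lemma ext_Ico {f g : HomeoZ} (h : ∀ x ∈ Ico (0 : ℝ) 1, (f : ℝ ≃ₜ ℝ) x = (g : ℝ ≃ₜ ℝ) x) :
    f = g := by
  refine Subtype.ext <| Homeomorph.ext fun x => ?_
  rw [← Int.fract_add_floor x, map_add_intCast, map_add_intCast,
    h _ ⟨Int.fract_nonneg x, Int.fract_lt_one x⟩]

noncomputable def ofStrictMono (f : ℝ → ℝ) (hmono : StrictMono f)
    (hsurj : Function.Surjective f) (hf : ∀ x, f (x + 1) = f x + 1) : HomeoZ :=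
  ⟨(hmono.orderIsoOfSurjective f hsurj).toHomeomorph, hf⟩

@[simp]
lemma ofStrictMono_apply (f : ℝ → ℝ) (hmono : StrictMono f) (hsurj : Function.Surjective f)
    (hf : ∀ x, f (x + 1) = f x + 1) (x : ℝ) :
    (ofStrictMono f hmono hsurj hf : ℝ ≃ₜ ℝ) x = f x := rfl

lemma surjective_of_continuous {f : ℝ → ℝ} (hcont : Continuous f) (hmono : Monotone f)
    (hf : ∀ x, f (x + 1) = f x + 1) : Function.Surjective f := by
  have hfloor (x : ℝ) : f ⌊x⌋ = f 0 + ⌊x⌋ := by simpa using apply_add_intCast hf 0 ⌊x⌋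
  refine hcont.surjective (Filter.tendsto_atTop_mono (fun x => ?_)
    (Filter.tendsto_atTop_add_const_right _ (f 0 - 1) Filter.tendsto_id))
    (Filter.tendsto_atBot_mono (fun x => ?_)
    (Filter.tendsto_atBot_add_const_right _ (f 0 + 1) Filter.tendsto_id))
  · have := hmono (Int.floor_le x)
    simp only [id]
    linarith [hfloor x, Int.lt_floor_add_one x]
  · have := hmono (Int.lt_floor_add_one x).le
    rw [hf, hfloor] at this
    simp only [id]
    linarith [Int.floor_le x]

noncomputable def ofContinuous (f : ℝ → ℝ) (hcont : Continuous f) (hmono : StrictMono f)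
    (hf : ∀ x, f (x + 1) = f x + 1) : HomeoZ :=
  ofStrictMono f hmono (surjective_of_continuous hcont hmono.monotone hf) hf

noncomputable def maxSelf (f : HomeoZ) : HomeoZ :=
  ofContinuous (fun x => max ((f : ℝ ≃ₜ ℝ) x) x) (by fun_prop)
    (fun _ _ h => max_lt_max (strictMono f h) h)
    (fun x => by rw [map_add_one, max_add_add_right])

lemma maxSelf_apply (f : HomeoZ) (x : ℝ) :
    (maxSelf f : ℝ ≃ₜ ℝ) x = max ((f : ℝ ≃ₜ ℝ) x) x := rfl

def transl (r : ℝ) : HomeoZ := ⟨Homeomorph.addRight r, fun x => add_right_comm x 1 r⟩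

@[simp]
lemma transl_apply (r x : ℝ) : (transl r : ℝ ≃ₜ ℝ) x = x + r := rfl

@[simp]
lemma transl_symm_apply (r x : ℝ) : (transl r : ℝ ≃ₜ ℝ).symm x = x - r :=
  (Homeomorph.symm_apply_eq _).2 (sub_add_cancel x r).symm

lemma transl_zero : transl 0 = 1 := Subtype.ext <| Homeomorph.ext fun x => add_zero x

lemma transl_add (a b : ℝ) : transl (a + b) = transl a * transl b :=
  Subtype.ext <| Homeomorph.ext fun x => by simp [add_right_comm, add_assoc]

lemma transl_zpow (r : ℝ) (m : ℤ) : transl r ^ m = transl (m * r) := by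
  induction m using Int.induction_on with
  | zero => simp [transl_zero]
  | succ k ih =>
    rw [zpow_add_one, ih, ← transl_add]
    push_cast; ring_nf
  | pred k ih =>
    rw [zpow_sub_one, ih, mul_inv_eq_iff_eq_mul, ← transl_add]
    push_cast; ring_nf

lemma transl_pow_den (q : ℚ) : transl q ^ q.den = tOne ^ q.num := by
  rw [← zpow_natCast, transl_zpow, show tOne = transl 1 from rfl, transl_zpow]
  congr 1
  exact_mod_cast (mul_comm _ _).trans (Rat.mul_den_eq_num q) |>.trans (mul_one _).symm

end HomeoZ

structure IsBump (q : ℝ ≃ₜ ℝ) : Prop where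
  strictMono : StrictMono q
  map_zero : q 0 = 0
  map_one : q 1 = 1
  lt_apply : ∀ x ∈ Ioo (0 : ℝ) 1, x < q x

/-- Conjugates `s ↦ s + 1` on `ℝ` to the bump `q` on `(0, 1)`: the affine parametrisation of the
fundamental domain `[1/2, q (1/2))`, transported by the powers of `q`. -/
noncomputable def bumpChart (q : ℝ ≃ₜ ℝ) (s : ℝ) : ℝ :=
  (q ^ ⌊s⌋) (1 / 2 + Int.fract s * (q (1 / 2) - 1 / 2))

lemma bumpChart_add_one (q : ℝ ≃ₜ ℝ) (s : ℝ) : bumpChart q (s + 1) = q (bumpChart q s) := by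
  simp only [bumpChart, Int.floor_add_one, Int.fract_add_one, Homeomorph.zpow_add_one_apply]

namespace IsBump

variable {q : ℝ ≃ₜ ℝ}

lemma zpow_mem_Ioo (hq : IsBump q) (n : ℤ) {x : ℝ} (hx : x ∈ Ioo (0 : ℝ) 1) :
    (q ^ n) x ∈ Ioo (0 : ℝ) 1 := by
  have hmono := Homeomorph.strictMono_zpow hq.strictMono n
  constructor
  · simpa only [Homeomorph.zpow_apply_eq_self hq.map_zero] using hmono hx.1
  · simpa only [Homeomorph.zpow_apply_eq_self hq.map_one] using hmono hx.2

lemma strictMono_orbit (hq : IsBump q) : StrictMono fun n : ℤ => (q ^ n) (1 / 2 : ℝ) :=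
  strictMono_int_of_lt_succ fun n => by
    simp only [Homeomorph.zpow_add_one_apply]
    exact hq.lt_apply _ (hq.zpow_mem_Ioo n half_mem_Ioo)

lemma exists_lt_orbit (hq : IsBump q) {x : ℝ} (hx : x ∈ Ioo (0 : ℝ) 1) :
    ∃ n : ℤ, x < (q ^ n) (1 / 2) := by
  by_contra! h
  have hbdd : BddAbove (range fun n : ℤ => (q ^ n) (1 / 2 : ℝ)) :=
    ⟨x, forall_mem_range.2 h⟩
  have hfix : q (⨆ n : ℤ, (q ^ n) (1 / 2)) = ⨆ n : ℤ, (q ^ n) (1 / 2) := by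
    rw [hq.strictMono.monotone.map_ciSup_of_continuousAt q.continuous.continuousAt hbdd]
    simp_rw [← Homeomorph.zpow_add_one_apply]
    exact (Equiv.addRight (1 : ℤ)).surjective.iSup_comp fun n => (q ^ n) (1 / 2 : ℝ)
  refine (hq.lt_apply _ ⟨?_, ?_⟩).ne' hfix
  · exact (hq.zpow_mem_Ioo 0 half_mem_Ioo).1.trans_le (le_ciSup hbdd 0)
  · exact (ciSup_le h).trans_lt hx.2

lemma exists_orbit_le (hq : IsBump q) {x : ℝ} (hx : x ∈ Ioo (0 : ℝ) 1) :
    ∃ n : ℤ, (q ^ n) (1 / 2) ≤ x := by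
  by_contra! h
  have hbdd : BddBelow (range fun n : ℤ => (q ^ n) (1 / 2 : ℝ)) :=
    ⟨x, forall_mem_range.2 fun n => (h n).le⟩
  have hfix : q (⨅ n : ℤ, (q ^ n) (1 / 2)) = ⨅ n : ℤ, (q ^ n) (1 / 2) := by
    rw [hq.strictMono.monotone.map_ciInf_of_continuousAt q.continuous.continuousAt hbdd]
    simp_rw [← Homeomorph.zpow_add_one_apply]
    exact (Equiv.addRight (1 : ℤ)).surjective.iInf_comp fun n => (q ^ n) (1 / 2 : ℝ)
  refine (hq.lt_apply _ ⟨?_, ?_⟩).ne' hfix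
  · exact hx.1.trans_le (le_ciInf fun n => (h n).le)
  · exact (ciInf_le hbdd 0).trans_lt (hq.zpow_mem_Ioo 0 half_mem_Ioo).2

lemma exists_orbit_le_lt (hq : IsBump q) {x : ℝ} (hx : x ∈ Ioo (0 : ℝ) 1) :
    ∃ n : ℤ, (q ^ n) (1 / 2) ≤ x ∧ x < (q ^ (n + 1)) (1 / 2) := by
  obtain ⟨N, hN⟩ := hq.exists_lt_orbit hx
  obtain ⟨n, hn, hmax⟩ := Int.exists_greatest_of_bdd
    ⟨N, fun m hm => (hq.strictMono_orbit.lt_iff_lt.1 (hm.trans_lt hN)).le⟩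
    (hq.exists_orbit_le hx)
  exact ⟨n, hn, lt_of_not_ge fun h => (hmax _ h).not_gt (lt_add_one n)⟩

lemma bumpChart_mem_Ico (hq : IsBump q) (s : ℝ) :
    bumpChart q s ∈ Ico ((q ^ ⌊s⌋) (1 / 2)) ((q ^ (⌊s⌋ + 1)) (1 / 2)) := by
  have hδ : 0 < q (1 / 2) - 1 / 2 := sub_pos.2 (hq.lt_apply _ half_mem_Ioo)
  have hmono := Homeomorph.strictMono_zpow hq.strictMono ⌊s⌋
  rw [zpow_add_one, Homeomorph.mul_apply]
  refine ⟨hmono.monotone ?_, hmono ?_⟩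
  · nlinarith [Int.fract_nonneg s]
  · nlinarith [Int.fract_lt_one s]

lemma bumpChart_mem_Ioo (hq : IsBump q) (s : ℝ) : bumpChart q s ∈ Ioo (0 : ℝ) 1 :=
  ⟨(hq.zpow_mem_Ioo _ half_mem_Ioo).1.trans_le (hq.bumpChart_mem_Ico s).1,
    (hq.bumpChart_mem_Ico s).2.trans (hq.zpow_mem_Ioo _ half_mem_Ioo).2⟩

lemma strictMono_bumpChart (hq : IsBump q) : StrictMono (bumpChart q) := by
  intro s t hst
  rcases (Int.floor_mono hst.le).lt_or_eq with hlt | heq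
  · calc bumpChart q s < (q ^ (⌊s⌋ + 1)) (1 / 2) := (hq.bumpChart_mem_Ico s).2
      _ ≤ (q ^ ⌊t⌋) (1 / 2) := hq.strictMono_orbit.monotone (Int.add_one_le_iff.2 hlt)
      _ ≤ bumpChart q t := (hq.bumpChart_mem_Ico t).1
  · have hδ : 0 < q (1 / 2) - 1 / 2 := sub_pos.2 (hq.lt_apply _ half_mem_Ioo)
    have hfract : Int.fract s < Int.fract t := by
      rw [Int.fract, Int.fract, heq]
      linarith
    unfold bumpChart
    rw [heq]
    exact Homeomorph.strictMono_zpow hq.strictMono _ (by gcongr)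

lemma exists_bumpChart_eq (hq : IsBump q) {x : ℝ} (hx : x ∈ Ioo (0 : ℝ) 1) :
    ∃ s, bumpChart q s = x := by
  obtain ⟨n, hn, hn'⟩ := hq.exists_orbit_le_lt hx
  have hδ : 0 < q (1 / 2) - 1 / 2 := sub_pos.2 (hq.lt_apply _ half_mem_Ioo)
  set y := (q ^ (-n)) x with hy
  have hmono := Homeomorph.strictMono_zpow hq.strictMono (-n)
  have hy1 : 1 / 2 ≤ y := by
    have := hmono.monotone hn
    rwa [Homeomorph.zpow_apply_zpow_apply, neg_add_cancel, zpow_zero] at this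
  have hy2 : y < q (1 / 2) := by
    have := hmono hn'
    rwa [Homeomorph.zpow_apply_zpow_apply, neg_add_cancel_left, zpow_one] at this
  set u := (y - 1 / 2) / (q (1 / 2) - 1 / 2) with hu
  have hu01 : u ∈ Ico (0 : ℝ) 1 :=
    ⟨div_nonneg (by linarith) hδ.le, (div_lt_one hδ).2 (by linarith)⟩
  refine ⟨n + u, ?_⟩
  rw [bumpChart, Int.floor_intCast_add, Int.fract_intCast_add, Int.floor_eq_zero_iff.2 hu01,
    Int.fract_eq_self.2 hu01, add_zero, hu, div_mul_cancel₀ _ hδ.ne', add_sub_cancel, hy,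
    Homeomorph.zpow_apply_zpow_apply, add_neg_cancel, zpow_zero, Homeomorph.one_apply]

noncomputable def chartIso (hq : IsBump q) : ℝ ≃o Ioo (0 : ℝ) 1 :=
  StrictMono.orderIsoOfSurjective (fun s => ⟨bumpChart q s, hq.bumpChart_mem_Ioo s⟩)
    (fun _ _ h => hq.strictMono_bumpChart h)
    (fun x => (hq.exists_bumpChart_eq x.2).imp fun _ hs => Subtype.ext hs)

lemma coe_chartIso (hq : IsBump q) (s : ℝ) : (hq.chartIso s : ℝ) = bumpChart q s := rfl

end IsBump

namespace HomeoZ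

section Periodize

variable {g : ℝ → ℝ}

lemma strictMono_periodize (hmono : StrictMonoOn g (Ico 0 1))
    (hmaps : MapsTo g (Ico 0 1) (Ico 0 1)) :
    StrictMono fun x => ⌊x⌋ + g (Int.fract x) := by
  intro x y hxy
  have hx : Int.fract x ∈ Ico (0 : ℝ) 1 := ⟨Int.fract_nonneg x, Int.fract_lt_one x⟩
  have hy : Int.fract y ∈ Ico (0 : ℝ) 1 := ⟨Int.fract_nonneg y, Int.fract_lt_one y⟩
  rcases (Int.floor_mono hxy.le).lt_or_eq with hlt | heq
  · have : (⌊x⌋ : ℝ) + 1 ≤ ⌊y⌋ := by exact_mod_cast hlt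
    linarith [(hmaps hx).2, (hmaps hy).1]
  · have hfract : Int.fract x < Int.fract y := by
      rw [Int.fract, Int.fract, heq]
      linarith
    simpa only [heq, add_lt_add_iff_left] using hmono hx hy hfract

lemma surjective_periodize (hsurj : SurjOn g (Ico 0 1) (Ico 0 1)) :
    Function.Surjective fun x => ⌊x⌋ + g (Int.fract x) := by
  intro y
  obtain ⟨z, hz, hgz⟩ := hsurj ⟨Int.fract_nonneg y, Int.fract_lt_one y⟩
  refine ⟨⌊y⌋ + z, ?_⟩
  simp only [Int.floor_intCast_add, Int.fract_intCast_add, Int.floor_eq_zero_iff.2 hz,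
    Int.fract_eq_self.2 hz, hgz, add_zero, Int.floor_add_fract]

noncomputable def ofIco (g : ℝ → ℝ) (hmono : StrictMonoOn g (Ico 0 1))
    (hbij : BijOn g (Ico 0 1) (Ico 0 1)) : HomeoZ :=
  ofStrictMono _ (strictMono_periodize hmono hbij.mapsTo) (surjective_periodize hbij.surjOn)
    fun x => by simp only [Int.floor_add_one, Int.fract_add_one]; push_cast; ring

lemma ofIco_apply_of_mem (hmono : StrictMonoOn g (Ico 0 1))
    (hbij : BijOn g (Ico 0 1) (Ico 0 1)) {x : ℝ} (hx : x ∈ Ico (0 : ℝ) 1) :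
    (ofIco g hmono hbij : ℝ ≃ₜ ℝ) x = g x := by
  simp [ofIco, Int.floor_eq_zero_iff.2 hx, Int.fract_eq_self.2 hx]

end Periodize

section ExtendIoo

variable (e : Ioo (0 : ℝ) 1 ≃o Ioo (0 : ℝ) 1)

noncomputable def extendIoo (x : ℝ) : ℝ := if hx : x ∈ Ioo (0 : ℝ) 1 then e ⟨x, hx⟩ else x

lemma extendIoo_of_mem {x : ℝ} (hx : x ∈ Ioo (0 : ℝ) 1) : extendIoo e x = e ⟨x, hx⟩ :=
  dif_pos hx

lemma extendIoo_zero : extendIoo e 0 = 0 := dif_neg fun h => h.1.false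

lemma strictMonoOn_extendIoo : StrictMonoOn (extendIoo e) (Ico 0 1) := by
  intro x hx y hy hxy
  rcases mem_Ico_iff_eq_zero_or_mem_Ioo.1 hy with rfl | hy
  · exact absurd hxy hx.1.not_gt
  rcases mem_Ico_iff_eq_zero_or_mem_Ioo.1 hx with rfl | hx
  · rw [extendIoo_zero, extendIoo_of_mem e hy]
    exact (e ⟨y, hy⟩).2.1
  · rw [extendIoo_of_mem e hx, extendIoo_of_mem e hy]
    exact e.strictMono (show (⟨x, hx⟩ : Ioo (0 : ℝ) 1) < ⟨y, hy⟩ from hxy)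

lemma bijOn_extendIoo : BijOn (extendIoo e) (Ico 0 1) (Ico 0 1) := by
  refine ⟨fun x hx => ?_, (strictMonoOn_extendIoo e).injOn, fun y hy => ?_⟩
  · rcases mem_Ico_iff_eq_zero_or_mem_Ioo.1 hx with rfl | hx
    · rw [extendIoo_zero]; exact hx
    · rw [extendIoo_of_mem e hx]; exact Ioo_subset_Ico_self (e ⟨x, hx⟩).2
  · rcases mem_Ico_iff_eq_zero_or_mem_Ioo.1 hy with rfl | hy
    · exact ⟨0, left_mem_Ico.2 zero_lt_one, extendIoo_zero e⟩
    · refine ⟨e.symm ⟨y, hy⟩, Ioo_subset_Ico_self (e.symm ⟨y, hy⟩).2, ?_⟩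
      rw [extendIoo_of_mem e (e.symm ⟨y, hy⟩).2]
      simp

noncomputable def ofIoo : HomeoZ :=
  ofIco (extendIoo e) (strictMonoOn_extendIoo e) (bijOn_extendIoo e)

lemma ofIoo_apply_zero : (ofIoo e : ℝ ≃ₜ ℝ) 0 = 0 := by
  rw [ofIoo, ofIco_apply_of_mem _ _ (left_mem_Ico.2 zero_lt_one), extendIoo_zero]

lemma ofIoo_apply_of_mem {x : ℝ} (hx : x ∈ Ioo (0 : ℝ) 1) :
    (ofIoo e : ℝ ≃ₜ ℝ) x = e ⟨x, hx⟩ := by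
  rw [ofIoo, ofIco_apply_of_mem _ _ (Ioo_subset_Ico_self hx), extendIoo_of_mem]

end ExtendIoo

lemma isBump_of_apply_zero {f : HomeoZ} (h0 : (f : ℝ ≃ₜ ℝ) 0 = 0)
    (hlt : ∀ x ∈ Ioo (0 : ℝ) 1, x < (f : ℝ ≃ₜ ℝ) x) : IsBump f where
  strictMono := strictMono f
  map_zero := h0
  map_one := by rw [← zero_add 1, map_add_one, h0]
  lt_apply := hlt

lemma exists_mul_eq_mul_of_isBump {q h : HomeoZ} (hq : IsBump q) (hh : IsBump h) :
    ∃ P : HomeoZ, P * q = h * P := by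
  refine ⟨ofIoo (hq.chartIso.symm.trans hh.chartIso), ext_Ico fun x hx => ?_⟩
  simp only [Subgroup.coe_mul, Homeomorph.mul_apply]
  rcases mem_Ico_iff_eq_zero_or_mem_Ioo.1 hx with rfl | hx
  · rw [hq.map_zero, ofIoo_apply_zero, hh.map_zero]
  have hqx : (q : ℝ ≃ₜ ℝ) x ∈ Ioo (0 : ℝ) 1 := by
    simpa only [zpow_one] using hq.zpow_mem_Ioo 1 hx
  have hs : hq.chartIso.symm ⟨_, hqx⟩ = hq.chartIso.symm ⟨x, hx⟩ + 1 := by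
    rw [OrderIso.symm_apply_eq]
    ext
    rw [hq.coe_chartIso, bumpChart_add_one, ← hq.coe_chartIso, OrderIso.apply_symm_apply]
  rw [ofIoo_apply_of_mem _ hqx, ofIoo_apply_of_mem _ hx]
  simp only [OrderIso.trans_apply, hs, IsBump.coe_chartIso, bumpChart_add_one]

/-- Chosen so that `wobble (x + 1/2) - 1/3 - wobble x = (1 - cos (2πx)) / 6`, which vanishes
exactly on `ℤ`: this makes `bump` below a bump. -/
noncomputable def wobble : HomeoZ :=
  ofContinuous (fun x => x + Real.cos (2 * Real.pi * x) / 12) (by fun_prop)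
    (fun a b hab => by
      have h := Real.abs_cos_sub_cos_le (2 * Real.pi * a) (2 * Real.pi * b)
      rw [abs_le, abs_of_neg (by nlinarith [Real.pi_pos])] at h
      nlinarith [Real.pi_lt_four])
    (fun x => by rw [mul_add, mul_one, Real.cos_add_two_pi]; ring)

noncomputable def bump : HomeoZ := wobble⁻¹ * transl (-1 / 3) * wobble * transl (1 / 2)

lemma wobble_apply (x : ℝ) :
    (wobble : ℝ ≃ₜ ℝ) x = x + Real.cos (2 * Real.pi * x) / 12 := rfl

lemma bump_apply (x : ℝ) :
    (bump : ℝ ≃ₜ ℝ) x = (wobble : ℝ ≃ₜ ℝ).symm ((wobble : ℝ ≃ₜ ℝ) (x + 1 / 2) + -1 / 3) := rfl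

lemma cos_two_pi_mul_lt_one {x : ℝ} (hx : x ∈ Ioo (0 : ℝ) 1) :
    Real.cos (2 * Real.pi * x) < 1 := by
  refine (Real.cos_le_one _).lt_of_ne fun h => ?_
  obtain ⟨n, hn⟩ := (Real.cos_eq_one_iff _).1 h
  have hnx : (n : ℝ) = x := by nlinarith [Real.pi_pos]
  have h0 : (0 : ℤ) < n := by exact_mod_cast hnx ▸ hx.1
  have h1 : n < (1 : ℤ) := by exact_mod_cast hnx ▸ hx.2
  omega

lemma isBump_bump : IsBump bump := by
  refine isBump_of_apply_zero ?_ fun x hx => ?_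
  · rw [bump_apply, Homeomorph.symm_apply_eq, wobble_apply, wobble_apply,
      show 2 * Real.pi * (0 + 1 / 2) = Real.pi by ring]
    norm_num
  · rw [bump_apply, ← (strictMono wobble).lt_iff_lt, Homeomorph.apply_symm_apply, wobble_apply,
      wobble_apply, show 2 * Real.pi * (x + 1 / 2) = 2 * Real.pi * x + Real.pi by ring,
      Real.cos_add_pi]
    linarith [cos_two_pi_mul_lt_one hx]

section NormalSubgroup

variable {N : Subgroup HomeoZ} [hN : N.Normal]

lemma bump_mem (htransl : ∀ q : ℚ, transl q ∈ N) : bump ∈ N := by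
  have h₁ : transl (-1 / 3) ∈ N := by simpa using htransl (-1 / 3)
  have h₂ : transl (1 / 2) ∈ N := by simpa using htransl (1 / 2)
  have := hN.conj_mem _ h₁ wobble⁻¹
  rw [inv_inv] at this
  exact N.mul_mem this h₂

lemma mem_of_isBump (htransl : ∀ q : ℚ, transl q ∈ N) {f : HomeoZ} (hf : IsBump f) :
    f ∈ N := by
  obtain ⟨P, hP⟩ := exists_mul_eq_mul_of_isBump hf isBump_bump
  have := hN.conj_mem _ (bump_mem htransl) P⁻¹
  rwa [inv_inv, mul_assoc, ← hP, inv_mul_cancel_left] at this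

lemma mem_of_apply_zero_of_le (htransl : ∀ q : ℚ, transl q ∈ N) {f : HomeoZ}
    (h0 : (f : ℝ ≃ₜ ℝ) 0 = 0) (hle : ∀ x, x ≤ (f : ℝ ≃ₜ ℝ) x) : f ∈ N := by
  have hfb : IsBump (f * bump : HomeoZ) := isBump_of_apply_zero
    (by rw [Subgroup.coe_mul, Homeomorph.mul_apply, isBump_bump.map_zero, h0])
    (fun x hx => (isBump_bump.lt_apply x hx).trans_le (hle _))
  simpa using N.mul_mem (mem_of_isBump htransl hfb) (N.inv_mem (bump_mem htransl))

lemma mem_of_apply_zero (htransl : ∀ q : ℚ, transl q ∈ N) {f : HomeoZ}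
    (h0 : (f : ℝ ≃ₜ ℝ) 0 = 0) : f ∈ N := by
  have hp : maxSelf f ∈ N :=
    mem_of_apply_zero_of_le htransl (by rw [maxSelf_apply, h0, max_self])
      fun x => le_max_right _ _
  have hm : f⁻¹ * maxSelf f ∈ N := by
    refine mem_of_apply_zero_of_le htransl ?_ fun x => ?_
    · simp [maxSelf_apply, h0, Homeomorph.symm_apply_eq]
    · simp only [Subgroup.coe_mul, Subgroup.coe_inv, Homeomorph.mul_apply, Homeomorph.inv_apply]
      rw [← (strictMono f).le_iff_le, Homeomorph.apply_symm_apply]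
      exact le_max_left _ _
  simpa using N.mul_mem hp (N.inv_mem hm)

lemma mem_of_apply_eq_self (htransl : ∀ q : ℚ, transl q ∈ N) {f : HomeoZ} {a : ℝ}
    (ha : (f : ℝ ≃ₜ ℝ) a = a) : f ∈ N := by
  have h : (transl a)⁻¹ * f * transl a ∈ N := mem_of_apply_zero htransl (by simp [ha])
  simpa [mul_assoc] using hN.conj_mem _ h (transl a)

lemma transl_mem (htransl : ∀ q : ℚ, transl q ∈ N) (r : ℝ) : transl r ∈ N := by
  have hδ : 0 < (bump : ℝ ≃ₜ ℝ) (1 / 2) - 1 / 2 :=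
    sub_pos.2 (isBump_bump.lt_apply _ half_mem_Ioo)
  obtain ⟨q, hrq, hqr⟩ := exists_rat_btwn (lt_add_of_pos_right r hδ)
  -- `transl r * bump` moves some point `a` by the rational amount `q`
  obtain ⟨a, -, ha⟩ := intermediate_value_Icc one_half_pos.le
    (f := fun x => (bump : ℝ ≃ₜ ℝ) x - x + r) (by fun_prop)
    ⟨by simpa [isBump_bump.map_zero] using hrq.le, by linarith⟩
  have hg : transl (-q) * transl r * bump ∈ N := mem_of_apply_eq_self htransl (a := a) <| by
    simp only [Subgroup.coe_mul, Homeomorph.mul_apply, transl_apply]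
    linarith
  have := N.mul_mem (N.mul_mem (htransl q) hg) (N.inv_mem (bump_mem htransl))
  rwa [← mul_assoc, ← mul_assoc, ← transl_add, add_neg_cancel, transl_zero, one_mul,
    mul_inv_cancel_right] at this

theorem eq_top_of_transl_mem (htransl : ∀ q : ℚ, transl q ∈ N) : N = ⊤ := by
  refine eq_top_iff.2 fun f _ => ?_
  have h : (transl ((f : ℝ ≃ₜ ℝ) 0))⁻¹ * f ∈ N :=
    mem_of_apply_eq_self htransl (a := 0) (by simp)
  have := N.mul_mem (transl_mem htransl ((f : ℝ ≃ₜ ℝ) 0)) h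
  rwa [mul_inv_cancel_left] at this

end NormalSubgroup

end HomeoZ

/-- For a group morphism `ψ : Homeo_ℤ(ℝ) → Homeo₊(ℝ)` and `t : x ↦ x + 1`, every
connected component of the complement of `Fix(ψ(t))` is preserved (setwise) by the image
of `ψ`, and the fixed-point set of the image of `ψ` is exactly `Fix(ψ(t))`. -/
theorem stmt_16 (ψ : HomeoZ →* HomeoPlus) :
    (∀ f : HomeoZ, ∀ x : ℝ, x ∉ {y : ℝ | (ψ tOne : ℝ ≃ₜ ℝ) y = y} →
      (ψ f : ℝ ≃ₜ ℝ) '' connectedComponentIn {y : ℝ | (ψ tOne : ℝ ≃ₜ ℝ) y = y}ᶜ x =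
        connectedComponentIn {y : ℝ | (ψ tOne : ℝ ≃ₜ ℝ) y = y}ᶜ x) ∧
      {x : ℝ | ∀ f : HomeoZ, (ψ f : ℝ ≃ₜ ℝ) x = x} =
        {x : ℝ | (ψ tOne : ℝ ≃ₜ ℝ) x = x} := by
  let φ : HomeoZ →* (ℝ ≃ₜ ℝ) := HomeoPlus.subtype.comp ψ
  have := fixingFixedPoints_normal φ HomeoZ.commute_tOne
  have htop : fixingFixedPoints φ tOne = ⊤ := HomeoZ.eq_top_of_transl_mem fun q =>
    mem_fixingFixedPoints_of_pow_eq (φ := φ) (fun g => (ψ g).2) q.den_nz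
      (HomeoZ.transl_pow_den q)
  have hfix (f : HomeoZ) (x : ℝ) (hx : (ψ tOne : ℝ ≃ₜ ℝ) x = x) : (ψ f : ℝ ≃ₜ ℝ) x = x :=
    (htop ▸ Subgroup.mem_top f : f ∈ fixingFixedPoints φ tOne) x hx
  exact ⟨fun f x hx => image_connectedComponentIn_compl_of_fixed (ψ f).2.monotone (hfix f) hx,
    Set.ext fun x => ⟨fun h => h tOne, fun h f => hfix f x h⟩⟩
end
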